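/- arXiv:1901.04839 — 8 statements merged into one kernel-verified Lean document; each statement's English description precedes it below -/
import Mathlib

section
/- Let a, b, c be complex numbers (or elements of a commutative ring) and let P_n, Q_n be the numerator and denominator of the n-th approximant of the continued fraction (-c)/a - c/(a+b) - c/(a+2b) - ... - c/(a+(n-1)b), defined by the recurrences P_1 = -c, Q_1 = a, P_2 = -c(a+b), Q_2 = a(a+b) - c, and P_{k+1} = (a+kb)P_k - c P_{k-1}, Q_{k+1} = (a+kb)Q_k - c Q_{k-1}. Then P_n = \sum_{i=1}^{\lfloor (n+1)/2 \rfloor} \binom{n-i}{i-1} (-c)^i \prod_{j=i}^{n-i} (a + jb). -/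
/-!
The closed form satisfies the same three-term recurrence as `P`, and does so term by term: after
splitting off one factor of each product, the `i`-th term of the closed form for `n = k + 2`
decomposes into `a + (k+1)b` times the `i`-th term for `k + 1` and `-c` times the `(i-1)`-th term
for `k`, by Pascal's rule together with `C(t, m+1) (m+1) = C(t, m) (t-m)`.
-/

open Finset

namespace LinearCF

variable {R : Type*} [CommRing R] (a b c : R)

def numTerm (n i : ℕ) : R :=
  ((n - i).choose (i - 1) : R) * (-c) ^ i * ∏ j ∈ Icc i (n - i), (a + (j : R) * b)

/-- The closed form of the numerator `P n` of `-c/a - c/(a+b) - ⋯ - c/(a+(n-1)b)`. -/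
def num (n : ℕ) : R :=
  ∑ i ∈ Icc 1 ((n + 1) / 2), numTerm a b c n i

-- Truncated subtraction gives `numTerm a b c 0 1 = -c`, not `0`.
theorem numTerm_eq_zero {n i : ℕ} (h : n + 2 ≤ 2 * i) (hi : i ≤ n) : numTerm a b c n i = 0 := by
  have hlt : n - i < i - 1 := by omega
  simp [numTerm, Nat.choose_eq_zero_of_lt hlt]

theorem num_eq_sum_range {n N : ℕ} (hN : (n + 1) / 2 ≤ N) (hNn : N ≤ n) :
    num a b c n = ∑ m ∈ range N, numTerm a b c n (m + 1) := by
  rw [range_eq_Ico, sum_Ico_add', zero_add, num, ← Ico_add_one_right_eq_Icc]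
  refine sum_subset (Ico_subset_Ico_right (by omega)) fun i hi hi' =>
    numTerm_eq_zero a b c (by simp only [mem_Ico] at hi hi'; omega) (by simp only [mem_Ico] at hi; omega)

theorem numTerm_succ_succ_one (k : ℕ) :
    numTerm a b c (k + 2) 1 = (a + ((k + 1 : ℕ) : R) * b) * numTerm a b c (k + 1) 1 := by
  simp only [numTerm, show k + 2 - 1 = k + 1 by omega, Nat.add_sub_cancel, Nat.sub_self,
    Nat.choose_zero_right, prod_Icc_succ_top (show 1 ≤ k + 1 by omega)]
  ring

theorem numTerm_succ_succ {k m : ℕ} (hm : 2 * m + 1 ≤ k) :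
    numTerm a b c (k + 2) (m + 2) =
      (a + ((k + 1 : ℕ) : R) * b) * numTerm a b c (k + 1) (m + 2) - c * numTerm a b c k (m + 1) := by
  obtain ⟨t, rfl⟩ : ∃ t, k = m + 1 + t := ⟨k - m - 1, by omega⟩
  have e1 : m + 1 + t + 2 - (m + 2) = t + 1 := by omega
  have e2 : m + 1 + t + 1 - (m + 2) = t := by omega
  have e3 : m + 1 + t - (m + 1) = t := by omega
  simp only [numTerm, e1, e2, e3, Nat.add_sub_cancel, show m + 2 - 1 = m + 1 by omega]
  rcases (show m ≤ t by omega).eq_or_lt with rfl | hlt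
  · rw [Nat.choose_self, Nat.choose_self, Nat.choose_succ_self,
      Icc_eq_empty_of_lt (show m + 1 < m + 2 by omega), Icc_eq_empty_of_lt (Nat.lt_succ_self m)]
    simp only [prod_empty, Nat.cast_one, Nat.cast_zero]
    ring
  · rw [prod_Icc_succ_top (by omega), ← mul_prod_Ioc_eq_prod_Icc (show m + 1 ≤ t by omega),
      ← Icc_add_one_left_eq_Ioc, Nat.choose_succ_succ]
    have hchoose : (t.choose (m + 1) : R) * (m + 1) = t.choose m * (t - m) := by
      rw [← Nat.cast_sub hlt.le]
      exact_mod_cast congrArg (Nat.cast : ℕ → R) (Nat.choose_succ_right_eq t m)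
    push_cast
    linear_combination (-b * (-c) ^ (m + 2) * ∏ j ∈ Icc (m + 2) t, (a + (j : R) * b)) * hchoose

theorem num_succ_succ (k : ℕ) :
    num a b c (k + 2) = (a + ((k + 1 : ℕ) : R) * b) * num a b c (k + 1) - c * num a b c k := by
  set N := (k + 1) / 2
  rw [num_eq_sum_range a b c (show (k + 2 + 1) / 2 ≤ N + 1 by omega) (by omega),
    num_eq_sum_range a b c (show (k + 1 + 1) / 2 ≤ N + 1 by omega) (by omega),
    num_eq_sum_range a b c le_rfl (by omega), sum_range_succ', sum_range_succ',
    sum_congr rfl fun m hm => numTerm_succ_succ a b c (show 2 * m + 1 ≤ k by rw [mem_range] at hm; omega),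
    numTerm_succ_succ_one, sum_sub_distrib, ← mul_sum, ← mul_sum]
  ring

end LinearCF

theorem stmt0 (a b c : ℂ) (P : ℕ → ℂ)
    (hP0 : P 0 = 0) (hP1 : P 1 = -c)
    (hrec : ∀ k : ℕ, 1 ≤ k → P (k+1) = (a + (k : ℂ) * b) * P k - c * P (k-1)) :
    ∀ n : ℕ, 1 ≤ n →
      P n = ∑ i ∈ Finset.Icc 1 ((n+1)/2),
        ((n - i).choose (i-1) : ℂ) * (-c)^i * ∏ j ∈ Finset.Icc i (n-i), (a + (j : ℂ) * b) := by
  have hP : ∀ n, P n = LinearCF.num a b c n := Nat.twoStepInduction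
    (by simp [hP0, LinearCF.num])
    (by simp [hP1, LinearCF.num, LinearCF.numTerm])
    fun k ih₀ ih₁ => by
      rw [hrec (k + 1) k.succ_pos, Nat.add_sub_cancel, ih₀, ih₁, LinearCF.num_succ_succ]
  exact fun n _ => hP n
end

section
/- Let a, b, c be complex numbers and let Q_n be the denominator of the n-th approximant of the continued fraction (-c)/a - c/(a+b) - c/(a+2b) - ... - c/(a+(n-1)b), defined by Q_0 = 1, Q_1 = a, and Q_{k+1} = (a+kb)Q_k - c Q_{k-1}. Then Q_n = \sum_{i=0}^{\lfloor n/2 \rfloor} \binom{n-i}{i} (-c)^i \prod_{j=i}^{n-1-i} (a + jb). -/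
/-!
Each term `C(n-i, i) (-c)^i ∏_{i ≤ j < n-i} (a + j b)` of the closed form satisfies the
three-term recurrence on its own, `T(k+2, i+1) = (a + (k+1) b) T(k+1, i+1) - c T(k, i)`: after
cancelling the common factors this is Pascal's rule combined with the absorption identity
`(i+1) C(i+m, i+1) = m C(i+m, i)`. Summing over `i`, the closed form satisfies the recurrence of
the denominators, and it has the same initial values.
-/

open Finset

section Continuant

variable {R : Type*} [CommRing R] (a b c : R)

/-- `Ico i (n - i)` agrees with `Icc i (n - 1 - i)` for `n ≥ 1` and gives the empty product at
`n = 0`. -/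
noncomputable def continuantTerm (n i : ℕ) : R :=
  ((n - i).choose i : R) * (-c) ^ i * ∏ j ∈ Ico i (n - i), (a + j * b)

noncomputable def continuantSum (n : ℕ) : R :=
  ∑ i ∈ range (n + 1), continuantTerm a b c n i

theorem continuantTerm_eq_zero {n i : ℕ} (h : n < 2 * i) : continuantTerm a b c n i = 0 := by
  simp [continuantTerm, Nat.choose_eq_zero_of_lt (show n - i < i by omega)]

theorem continuantTerm_zero_right (n : ℕ) :
    continuantTerm a b c n 0 = ∏ j ∈ range n, (a + j * b) := by
  simp [continuantTerm, Nat.Ico_zero_eq_range]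

theorem continuantTerm_two_mul_add (i m : ℕ) :
    continuantTerm a b c (2 * i + m) i =
      ((i + m).choose i : R) * (-c) ^ i * ∏ j ∈ Ico i (i + m), (a + j * b) := by
  simp only [continuantTerm, show 2 * i + m - i = i + m by omega]

/-- The recurrence of `continuantTerm` after cancelling `(-c)^(i+1) ∏_{i < j < i+m} (a + j b)`. -/
theorem choose_succ_succ_mul_linear (i m : ℕ) :
    ((i + m + 1).choose (i + 1) : R) * (a + (i + m : ℕ) * b) =
      (a + (2 * i + m + 1 : ℕ) * b) * (i + m).choose (i + 1) +
        (i + m).choose i * (a + i * b) := by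
  have habsorb : (i + m).choose (i + 1) * (i + 1) = (i + m).choose i * m := by
    simpa using Nat.choose_succ_right_eq (i + m) i
  have habsorb' := congrArg (Nat.cast : ℕ → R) habsorb
  rw [Nat.choose_succ_succ' (i + m) i]
  push_cast at habsorb' ⊢
  linear_combination (-b) * habsorb'

theorem continuantTerm_add_two_succ (k i : ℕ) :
    continuantTerm a b c (k + 2) (i + 1) =
      (a + (k + 1 : ℕ) * b) * continuantTerm a b c (k + 1) (i + 1) -
        c * continuantTerm a b c k i := by
  obtain hk | hk := lt_or_ge k (2 * i)
  · simp [continuantTerm_eq_zero, hk, show k + 1 < 2 * (i + 1) by omega,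
      show k + 2 < 2 * (i + 1) by omega]
  obtain ⟨m, rfl⟩ := Nat.exists_eq_add_of_le hk
  rcases m with _ | m
  · rw [continuantTerm_eq_zero a b c (show 2 * i + 0 + 1 < 2 * (i + 1) by omega),
      show 2 * i + 0 + 2 = 2 * (i + 1) + 0 by ring, continuantTerm_two_mul_add,
      continuantTerm_two_mul_add]
    simp [pow_succ, mul_comm]
  rw [show 2 * i + (m + 1) + 2 = 2 * (i + 1) + (m + 1) by ring,
    show 2 * i + (m + 1) + 1 = 2 * (i + 1) + m by ring, continuantTerm_two_mul_add,
    continuantTerm_two_mul_add, continuantTerm_two_mul_add,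
    show i + 1 + m = i + (m + 1) by ring, show i + 1 + (m + 1) = i + (m + 1) + 1 by ring,
    prod_Ico_succ_top (by omega), prod_eq_prod_Ico_succ_bot (show i < i + (m + 1) by omega)]
  have key := choose_succ_succ_mul_linear a b i (m + 1)
  push_cast at key ⊢
  linear_combination (-c) ^ (i + 1) * (∏ j ∈ Ico (i + 1) (i + (m + 1)), (a + j * b)) * key

theorem continuantSum_zero : continuantSum a b c 0 = 1 := by
  simp [continuantSum, continuantTerm_zero_right]

theorem continuantSum_one : continuantSum a b c 1 = a := by
  simp [continuantSum, sum_range_succ, continuantTerm_zero_right,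
    continuantTerm_eq_zero a b c (show 1 < 2 * 1 by norm_num)]

theorem continuantSum_add_two (k : ℕ) :
    continuantSum a b c (k + 2) =
      (a + (k + 1 : ℕ) * b) * continuantSum a b c (k + 1) - c * continuantSum a b c k := by
  have htop : continuantTerm a b c (k + 1) (k + 2) = 0 := continuantTerm_eq_zero a b c (by omega)
  have htop' : continuantTerm a b c k (k + 1) = 0 := continuantTerm_eq_zero a b c (by omega)
  have hzero : continuantTerm a b c (k + 2) 0 =
      (a + (k + 1 : ℕ) * b) * continuantTerm a b c (k + 1) 0 := by
    simp only [continuantTerm_zero_right, prod_range_succ _ (k + 1)]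
    ring
  calc continuantSum a b c (k + 2)
      = ∑ i ∈ range (k + 2), ((a + (k + 1 : ℕ) * b) * continuantTerm a b c (k + 1) (i + 1) -
            c * continuantTerm a b c k i) +
          (a + (k + 1 : ℕ) * b) * continuantTerm a b c (k + 1) 0 := by
        rw [continuantSum, sum_range_succ', hzero]
        simp only [continuantTerm_add_two_succ]
    _ = (a + (k + 1 : ℕ) * b) * ∑ i ∈ range (k + 3), continuantTerm a b c (k + 1) i -
          c * ∑ i ∈ range (k + 2), continuantTerm a b c k i := by
        rw [sum_sub_distrib, ← mul_sum, ← mul_sum, sum_range_succ' _ (k + 2)]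
        ring
    _ = _ := by
        rw [continuantSum, continuantSum,
          sum_range_succ (fun i ↦ continuantTerm a b c (k + 1) i) (k + 2),
          sum_range_succ (fun i ↦ continuantTerm a b c k i) (k + 1), htop, htop']
        ring

theorem continuantSum_eq_sum_range_half (n : ℕ) :
    continuantSum a b c n = ∑ i ∈ range (n / 2 + 1), continuantTerm a b c n i :=
  (sum_subset (range_subset_range.2 (by omega)) fun i _ hi ↦
    continuantTerm_eq_zero a b c (by rw [mem_range] at hi; omega)).symm

theorem eq_continuantSum_of_recurrence (Q : ℕ → R) (h0 : Q 0 = 1) (h1 : Q 1 = a)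
    (hrec : ∀ k, Q (k + 2) = (a + (k + 1 : ℕ) * b) * Q (k + 1) - c * Q k) (n : ℕ) :
    Q n = continuantSum a b c n := by
  induction n using Nat.twoStepInduction with
  | zero => rw [h0, continuantSum_zero]
  | one => rw [h1, continuantSum_one]
  | more k hk hk1 => rw [hrec, continuantSum_add_two, hk, hk1]

end Continuant

theorem stmt1 (a b c : ℂ) (Q : ℕ → ℂ)
    (hQ0 : Q 0 = 1) (hQ1 : Q 1 = a)
    (hrec : ∀ k : ℕ, 1 ≤ k → Q (k+1) = (a + (k : ℂ) * b) * Q k - c * Q (k-1)) :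
    ∀ n : ℕ, 1 ≤ n →
      Q n = ∑ i ∈ Finset.range (n/2 + 1),
        ((n - i).choose i : ℂ) * (-c)^i * ∏ j ∈ Finset.Icc i (n-1-i), (a + (j : ℂ) * b) := by
  intro n hn
  have hrec' : ∀ k, Q (k + 2) = (a + (k + 1 : ℕ) * b) * Q (k + 1) - c * Q k := fun k ↦ by
    simpa using hrec (k + 1) (by omega)
  rw [eq_continuantSum_of_recurrence a b c Q hQ0 hQ1 hrec' n, continuantSum_eq_sum_range_half]
  refine sum_congr rfl fun i _ ↦ ?_
  have hIcc : Icc i (n - 1 - i) = Ico i (n - i) := by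
    ext j
    simp only [mem_Icc, mem_Ico]
    omega
  rw [continuantTerm, hIcc]
end

section
/- Let p be a nonzero real number and (a_i)_{i≥1} a sequence of positive reals such that the continued fraction (1/p)/1 - (p/a_1)/1 + (p/a_1)/1 - (1/(p a_2))/1 + (1/(p a_2))/1 - (p/a_3)/1 + (p/a_3)/1 - ... converges. Then the continued fraction with quasi-periodic partial quotients [0; p, -a_1/p^2, -p, a_2, p, -a_3/p^2, -p, a_4, ...] (period pattern p, -a_{2n-1}/p^2, -p, a_{2n}) equals 1/p + [0; a_1, a_2, a_3, ...]. -/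
open Filter Topology

/-- Canonical numerators of the continued fraction `b₀ + K(aₙ/bₙ)`,
shifted so that `CFnum pa pb (n+1)` is the classical `Aₙ` (and `CFnum pa pb 0 = A₋₁ = 1`). -/
def CFnum (pa pb : ℕ → ℝ) : ℕ → ℝ
  | 0 => 1
  | 1 => pb 0
  | n + 2 => pb (n+1) * CFnum pa pb (n+1) + pa (n+1) * CFnum pa pb n

/-- Canonical denominators, shifted as in `CFnum`. -/
def CFden (pa pb : ℕ → ℝ) : ℕ → ℝ
  | 0 => 0
  | 1 => 1
  | n + 2 => pb (n+1) * CFden pa pb (n+1) + pa (n+1) * CFden pa pb n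

/-- The continued fraction `b₀ + K(aₙ/bₙ)` converges to `x`. -/
def CFConvTo (pa pb : ℕ → ℝ) (x : ℝ) : Prop :=
  Tendsto (fun n => CFnum pa pb (n+1) / CFden pa pb (n+1)) atTop (𝓝 x)

/-!
Scaling the `n`-th numerator and denominator of `K(pa1 n / 1)` by `pb2 1 ⋯ pb2 n` (an equivalence
transformation) turns its partial denominators into `pb2 n` and its partial numerators into
`pb2 n * pb2 (n-1) * pa1 n = 1`, so the quasi-periodic continued fraction has the same convergents
and converges to the value `x` of `K(pa1 n / 1)`. Since consecutive numerators
`pa1 (2k+1) = -pa1 (2k)` cancel in pairs, the odd convergents of `K(pa1 n / 1)` are the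
convergents of its contraction `1/p + (1/a₁)/1 + (1/(a₁a₂))/1 + …`, which an equivalence
transformation by the factors `aₙ` turns into `1/p + [0; a₁, a₂, …]`. So the convergents of
`[0; a₁, a₂, …]` tend to `x - 1/p`.
-/

open Finset Function

def IsCFRec (pa pb F : ℕ → ℝ) : Prop :=
  ∀ n, F (n + 2) = pb (n + 1) * F (n + 1) + pa (n + 1) * F n

theorem isCFRec_CFnum {pa pb : ℕ → ℝ} : IsCFRec pa pb (CFnum pa pb) := fun _ => rfl

theorem isCFRec_CFden {pa pb : ℕ → ℝ} : IsCFRec pa pb (CFden pa pb) := fun _ => rfl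

namespace IsCFRec

variable {pa pb pa' pb' F G r : ℕ → ℝ}

theorem eq (hF : IsCFRec pa pb F) (hG : IsCFRec pa pb G) (h0 : F 0 = G 0) (h1 : F 1 = G 1) :
    ∀ n, F n = G n :=
  Nat.twoStepInduction h0 h1 fun n ih ih' => by rw [hF, hG, ih, ih']

theorem prod_mul (hF : IsCFRec pa pb F) (hb : ∀ n, pb' (n + 1) = r (n + 1) * pb (n + 1))
    (ha : ∀ n, pa' (n + 1) = r (n + 1) * r n * pa (n + 1)) :
    IsCFRec pa' pb' fun n => (∏ k ∈ range n, r k) * F n := by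
  intro n
  simp only [prod_range_succ, hF n, hb, ha]
  ring

theorem comp_two_mul (hF : IsCFRec pa pb F) (hb : ∀ n, pb (n + 1) = 1)
    (ha : ∀ n, pa (2 * n + 3) = -pa (2 * n + 2))
    (ha' : ∀ n, pa' (n + 1) = -(pa (2 * n + 2) * pa (2 * n + 1))) (hb' : ∀ n, pb' (n + 1) = 1) :
    IsCFRec pa' pb' fun n => F (2 * n) := by
  intro n
  have h3 := hF (2 * n + 2)
  have h2 := hF (2 * n + 1)
  have h1 := hF (2 * n)
  simp only [hb, one_mul, ha] at h1 h2 h3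
  show F (2 * n + 4) = pb' (n + 1) * F (2 * n + 2) + pa' (n + 1) * F (2 * n)
  rw [hb', ha']
  linear_combination h3 + h2 - pa (2 * n + 2) * h1

end IsCFRec

section Transformations

variable {pa pb pa' pb' r : ℕ → ℝ}

theorem CFnum_eq_prod_mul (hr : r 0 = 1) (hb : ∀ n, pb' n = r n * pb n)
    (ha : ∀ n, pa' (n + 1) = r (n + 1) * r n * pa (n + 1)) (n : ℕ) :
    CFnum pa' pb' n = (∏ k ∈ range n, r k) * CFnum pa pb n :=
  isCFRec_CFnum.eq (isCFRec_CFnum.prod_mul (fun n => hb (n + 1)) ha) (by simp [CFnum])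
    (by simp [CFnum, hb, hr]) n

theorem CFden_eq_prod_mul (hr : r 0 = 1) (hb : ∀ n, pb' (n + 1) = r (n + 1) * pb (n + 1))
    (ha : ∀ n, pa' (n + 1) = r (n + 1) * r n * pa (n + 1)) (n : ℕ) :
    CFden pa' pb' n = (∏ k ∈ range n, r k) * CFden pa pb n :=
  isCFRec_CFden.eq (isCFRec_CFden.prod_mul hb ha) (by simp [CFden]) (by simp [CFden, hr]) n

theorem CFnum_div_CFden_eq (hr : r 0 = 1) (hr' : ∀ n, r n ≠ 0) (hb : ∀ n, pb' n = r n * pb n)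
    (ha : ∀ n, pa' (n + 1) = r (n + 1) * r n * pa (n + 1)) (n : ℕ) :
    CFnum pa' pb' n / CFden pa' pb' n = CFnum pa pb n / CFden pa pb n := by
  rw [CFnum_eq_prod_mul hr hb ha, CFden_eq_prod_mul hr (fun n => hb (n + 1)) ha,
    mul_div_mul_left _ _ (prod_ne_zero_iff.mpr fun k _ => hr' k)]

theorem CFnum_two_mul (hb : ∀ n, pb (n + 1) = 1) (ha : ∀ n, pa (2 * n + 3) = -pa (2 * n + 2))
    (ha' : ∀ n, pa' (n + 1) = -(pa (2 * n + 2) * pa (2 * n + 1))) (hb' : ∀ n, pb' (n + 1) = 1)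
    (hb'0 : pb' 0 = pb 0 + pa 1) (n : ℕ) :
    CFnum pa pb (2 * n) = CFnum pa' pb' n :=
  (isCFRec_CFnum.comp_two_mul hb ha ha' hb').eq isCFRec_CFnum rfl
    (by simp [CFnum, hb'0, hb]) n

theorem CFden_two_mul (hb : ∀ n, pb (n + 1) = 1) (ha : ∀ n, pa (2 * n + 3) = -pa (2 * n + 2))
    (ha' : ∀ n, pa' (n + 1) = -(pa (2 * n + 2) * pa (2 * n + 1))) (hb' : ∀ n, pb' (n + 1) = 1)
    (n : ℕ) :
    CFden pa pb (2 * n) = CFden pa' pb' n :=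
  (isCFRec_CFden.comp_two_mul hb ha ha' hb').eq isCFRec_CFden rfl (by simp [CFden, hb]) n

theorem CFnum_eq_add_CFden (hb : ∀ n, pb' (n + 1) = pb (n + 1)) (n : ℕ) :
    CFnum pa pb' n = CFnum pa pb n + (pb' 0 - pb 0) * CFden pa pb n := by
  refine isCFRec_CFnum.eq (G := fun n => CFnum pa pb n + (pb' 0 - pb 0) * CFden pa pb n)
    (fun n => ?_) (by simp [CFnum, CFden]) (by simp [CFnum, CFden]) n
  simp only [isCFRec_CFnum n, isCFRec_CFden n, hb]
  ring

theorem CFden_eq_of_succ (hb : ∀ n, pb' (n + 1) = pb (n + 1)) (n : ℕ) :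
    CFden pa pb' n = CFden pa pb n :=
  IsCFRec.eq (F := CFden pa pb') (G := CFden pa pb) isCFRec_CFden
    (fun n => by rw [hb]; exact isCFRec_CFden n) rfl rfl n

theorem CFden_pos (ha : ∀ n, 0 ≤ pa (n + 1)) (hb : ∀ n, 0 < pb (n + 1)) (n : ℕ) :
    0 < CFden pa pb (n + 1) := by
  induction n using Nat.strong_induction_on with
  | _ n ih =>
    match n, ih with
    | 0, _ => simp [CFden]
    | 1, _ => simpa [CFden] using hb 0
    | n + 2, ih =>
      rw [isCFRec_CFden]
      have := ih (n + 1) (by omega)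
      have := ih n (by omega)
      have := hb (n + 1)
      have := ha (n + 1)
      positivity

end Transformations

section PairedNumerators

variable {p : ℝ} {a pa1 pb2 : ℕ → ℝ}

theorem pa1_four_mul_add_two (h2 : ∀ m, 1 ≤ m → pa1 (4*m-2) = -(p / a (2*m-1))) (m : ℕ) :
    pa1 (4 * m + 2) = -(p / a (2 * m + 1)) := by
  have h := h2 (m + 1) (by omega)
  rwa [show 4 * (m + 1) - 2 = 4 * m + 2 by omega, show 2 * (m + 1) - 1 = 2 * m + 1 by omega] at h

theorem pa1_four_mul_add_three (h3 : ∀ m, 1 ≤ m → pa1 (4*m-1) = p / a (2*m-1)) (m : ℕ) :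
    pa1 (4 * m + 3) = p / a (2 * m + 1) := by
  have h := h3 (m + 1) (by omega)
  rwa [show 4 * (m + 1) - 1 = 4 * m + 3 by omega, show 2 * (m + 1) - 1 = 2 * m + 1 by omega] at h

theorem pa1_four_mul_add_four (h4 : ∀ m, 1 ≤ m → pa1 (4*m) = -(1/(p * a (2*m)))) (m : ℕ) :
    pa1 (4 * m + 4) = -(1 / (p * a (2 * m + 2))) := by
  simpa [mul_add] using h4 (m + 1) (by omega)

theorem pa1_four_mul_add_five (h5 : ∀ m, 1 ≤ m → pa1 (4*m+1) = 1/(p * a (2*m))) (m : ℕ) :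
    pa1 (4 * m + 5) = 1 / (p * a (2 * m + 2)) := by
  simpa [mul_add] using h5 (m + 1) (by omega)

theorem pb2_four_mul_add_two (hq2 : ∀ n, 1 ≤ n → n % 4 = 2 → pb2 n = -(a (n/2) / p^2))
    (m : ℕ) :
    pb2 (4 * m + 2) = -(a (2 * m + 1) / p ^ 2) := by
  rw [hq2 _ (by omega) (by omega), show (4 * m + 2) / 2 = 2 * m + 1 by omega]

theorem pb2_four_mul_add_four (hq4 : ∀ n, 1 ≤ n → n % 4 = 0 → pb2 n = a (n/2)) (m : ℕ) :
    pb2 (4 * m + 4) = a (2 * m + 2) := by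
  rw [hq4 _ (by omega) (by omega), show (4 * m + 4) / 2 = 2 * m + 2 by omega]

theorem pa1_two_mul_add_three (h2 : ∀ m, 1 ≤ m → pa1 (4*m-2) = -(p / a (2*m-1)))
    (h3 : ∀ m, 1 ≤ m → pa1 (4*m-1) = p / a (2*m-1))
    (h4 : ∀ m, 1 ≤ m → pa1 (4*m) = -(1/(p * a (2*m))))
    (h5 : ∀ m, 1 ≤ m → pa1 (4*m+1) = 1/(p * a (2*m))) (k : ℕ) :
    pa1 (2 * k + 3) = -pa1 (2 * k + 2) := by
  obtain ⟨m, rfl | rfl⟩ := Nat.even_or_odd' k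
  · rw [show 2 * (2 * m) + 3 = 4 * m + 3 by ring, show 2 * (2 * m) + 2 = 4 * m + 2 by ring,
      pa1_four_mul_add_three h3, pa1_four_mul_add_two h2, neg_neg]
  · rw [show 2 * (2 * m + 1) + 3 = 4 * m + 5 by ring, show 2 * (2 * m + 1) + 2 = 4 * m + 4 by ring,
      pa1_four_mul_add_five h5, pa1_four_mul_add_four h4, neg_neg]

theorem update_mul_update_mul_odd_part (hp : p ≠ 0) (ha : ∀ n, 1 ≤ n → a n ≠ 0)
    (h1 : pa1 1 = 1/p)
    (h2 : ∀ m, 1 ≤ m → pa1 (4*m-2) = -(p / a (2*m-1)))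
    (h3 : ∀ m, 1 ≤ m → pa1 (4*m-1) = p / a (2*m-1))
    (h4 : ∀ m, 1 ≤ m → pa1 (4*m) = -(1/(p * a (2*m))))
    (h5 : ∀ m, 1 ≤ m → pa1 (4*m+1) = 1/(p * a (2*m))) (n : ℕ) :
    update a 0 1 (n + 1) * update a 0 1 n * -(pa1 (2 * n + 2) * pa1 (2 * n + 1)) = 1 := by
  rcases n with _ | n
  · have := ha 1 le_rfl
    simp only [zero_add, update_self, update_of_ne one_ne_zero]
    rw [h1, pa1_four_mul_add_two h2 0, mul_zero, zero_add]
    field_simp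
  simp only [update_of_ne n.add_one_ne_zero, update_of_ne (n + 1).add_one_ne_zero]
  obtain ⟨m, rfl | rfl⟩ := Nat.even_or_odd' n
  · rw [show 2 * (2 * m + 1) + 2 = 4 * m + 4 by ring, show 2 * (2 * m + 1) + 1 = 4 * m + 3 by ring,
      pa1_four_mul_add_four h4, pa1_four_mul_add_three h3]
    have := ha (2 * m + 1) (by omega)
    have := ha (2 * m + 2) (by omega)
    field_simp
  · rw [show 2 * (2 * m + 1 + 1) + 2 = 4 * (m + 1) + 2 by ring,
      show 2 * (2 * m + 1 + 1) + 1 = 4 * m + 5 by ring,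
      pa1_four_mul_add_two h2, pa1_four_mul_add_five h5,
      show 2 * (m + 1) + 1 = 2 * m + 1 + 1 + 1 by ring]
    have := ha (2 * m + 1 + 1) (by omega)
    have := ha (2 * m + 1 + 1 + 1) (by omega)
    field_simp

theorem update_pb2_ne_zero (hp : p ≠ 0) (ha : ∀ n, 1 ≤ n → a n ≠ 0)
    (hq1 : ∀ n, n % 4 = 1 → pb2 n = p)
    (hq2 : ∀ n, 1 ≤ n → n % 4 = 2 → pb2 n = -(a (n/2) / p^2))
    (hq3 : ∀ n, n % 4 = 3 → pb2 n = -p)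
    (hq4 : ∀ n, 1 ≤ n → n % 4 = 0 → pb2 n = a (n/2)) (n : ℕ) :
    update pb2 0 1 n ≠ 0 := by
  rcases n with _ | n
  · simp
  rw [update_of_ne n.succ_ne_zero]
  have : (n + 1) % 4 = 0 ∨ (n + 1) % 4 = 1 ∨ (n + 1) % 4 = 2 ∨ (n + 1) % 4 = 3 := by omega
  rcases this with h | h | h | h
  · rw [hq4 _ (by omega) h]; exact ha _ (by omega)
  · rw [hq1 _ h]; exact hp
  · rw [hq2 _ (by omega) h]
    exact neg_ne_zero.mpr (div_ne_zero (ha _ (by omega)) (pow_ne_zero 2 hp))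
  · rw [hq3 _ h]; exact neg_ne_zero.mpr hp

theorem update_mul_update_mul_pa1 (hp : p ≠ 0) (ha : ∀ n, 1 ≤ n → a n ≠ 0)
    (h1 : pa1 1 = 1/p)
    (h2 : ∀ m, 1 ≤ m → pa1 (4*m-2) = -(p / a (2*m-1)))
    (h3 : ∀ m, 1 ≤ m → pa1 (4*m-1) = p / a (2*m-1))
    (h4 : ∀ m, 1 ≤ m → pa1 (4*m) = -(1/(p * a (2*m))))
    (h5 : ∀ m, 1 ≤ m → pa1 (4*m+1) = 1/(p * a (2*m)))
    (hq1 : ∀ n, n % 4 = 1 → pb2 n = p)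
    (hq2 : ∀ n, 1 ≤ n → n % 4 = 2 → pb2 n = -(a (n/2) / p^2))
    (hq3 : ∀ n, n % 4 = 3 → pb2 n = -p)
    (hq4 : ∀ n, 1 ≤ n → n % 4 = 0 → pb2 n = a (n/2)) (n : ℕ) :
    update pb2 0 1 (n + 1) * update pb2 0 1 n * pa1 (n + 1) = 1 := by
  rcases n with _ | n
  · simp only [zero_add, update_self, update_of_ne one_ne_zero]
    rw [hq1 1 rfl, h1]
    field_simp
  simp only [update_of_ne n.add_one_ne_zero, update_of_ne (n + 1).add_one_ne_zero]
  obtain ⟨m, j, hj, rfl⟩ : ∃ m j, j < 4 ∧ n = 4 * m + j :=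
    ⟨n / 4, n % 4, by omega, by omega⟩
  interval_cases j
  · show pb2 (4 * m + 2) * pb2 (4 * m + 1) * pa1 (4 * m + 2) = 1
    rw [pb2_four_mul_add_two hq2, hq1 _ (by omega), pa1_four_mul_add_two h2]
    have := ha (2 * m + 1) (by omega)
    field_simp
  · show pb2 (4 * m + 3) * pb2 (4 * m + 2) * pa1 (4 * m + 3) = 1
    rw [hq3 _ (by omega), pb2_four_mul_add_two hq2, pa1_four_mul_add_three h3]
    have := ha (2 * m + 1) (by omega)
    field_simp
  · show pb2 (4 * m + 4) * pb2 (4 * m + 3) * pa1 (4 * m + 4) = 1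
    rw [pb2_four_mul_add_four hq4, hq3 _ (by omega), pa1_four_mul_add_four h4]
    have := ha (2 * m + 2) (by omega)
    field_simp
  · show pb2 (4 * m + 5) * pb2 (4 * m + 4) * pa1 (4 * m + 5) = 1
    rw [hq1 _ (by omega), pb2_four_mul_add_four hq4, pa1_four_mul_add_five h5]
    have := ha (2 * m + 2) (by omega)
    field_simp

theorem odd_convergent_eq (hp : p ≠ 0) (ha : ∀ n, 1 ≤ n → 0 < a n)
    (h1 : pa1 1 = 1/p)
    (h2 : ∀ m, 1 ≤ m → pa1 (4*m-2) = -(p / a (2*m-1)))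
    (h3 : ∀ m, 1 ≤ m → pa1 (4*m-1) = p / a (2*m-1))
    (h4 : ∀ m, 1 ≤ m → pa1 (4*m) = -(1/(p * a (2*m))))
    (h5 : ∀ m, 1 ≤ m → pa1 (4*m+1) = 1/(p * a (2*m))) (n : ℕ) :
    CFnum pa1 (fun n => if n = 0 then 0 else 1) (2 * n + 2) /
        CFden pa1 (fun n => if n = 0 then 0 else 1) (2 * n + 2) =
      1 / p + CFnum (fun _ => 1) (fun n => if n = 0 then 0 else a n) (n + 1) /
        CFden (fun _ => 1) (fun n => if n = 0 then 0 else a n) (n + 1) := by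
  have ha' : ∀ n, 1 ≤ n → a n ≠ 0 := fun n hn => (ha n hn).ne'
  have hb : ∀ n, (if n + 1 = 0 then (0 : ℝ) else 1) = 1 := fun n => if_neg n.add_one_ne_zero
  have hb' : ∀ n, (if n + 1 = 0 then 1 / p else 1) = 1 := fun n => if_neg n.add_one_ne_zero
  have hpair := pa1_two_mul_add_three h2 h3 h4 h5
  have hQ : 0 < CFden (fun _ => 1) (fun n => if n = 0 then 0 else a n) (n + 1) :=
    CFden_pos (fun _ => zero_le_one) (fun n => by simpa using ha (n + 1) (by omega)) n
  set pa' : ℕ → ℝ := fun n => -(pa1 (2 * n) * pa1 (2 * n - 1))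
  set pb' : ℕ → ℝ := fun n => if n = 0 then 1 / p else 1
  -- contract, rescale the contraction by the factors `aₙ`, then move `b₀ = 1/p` out
  rw [show 2 * n + 2 = 2 * (n + 1) by ring,
    CFnum_two_mul (pa' := pa') (pb' := pb') hb hpair (fun _ => rfl) hb' (by simp [pb', h1]),
    CFden_two_mul (pa' := pa') (pb' := pb') hb hpair (fun _ => rfl) hb',
    ← CFnum_div_CFden_eq (r := update a 0 1) (pa' := fun _ => 1) (pb' := update a 0 (1 / p))
      (update_self _ _ _) (fun n => by rcases n with _ | n <;> simp [ha' (n + 1)])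
      (fun n => by rcases n with _ | n <;> simp [pb'])
      (fun n => (update_mul_update_mul_odd_part hp ha' h1 h2 h3 h4 h5 n).symm),
    CFnum_eq_add_CFden (pb := fun n => if n = 0 then 0 else a n) (pb' := update a 0 (1 / p))
      (fun n => by simp),
    CFden_eq_of_succ (pb := fun n => if n = 0 then 0 else a n) (pb' := update a 0 (1 / p))
      (fun n => by simp)]
  simp only [update_self, if_pos, sub_zero]
  field_simp
  ring

end PairedNumerators

theorem stmt9 (p : ℝ) (hp : p ≠ 0) (a : ℕ → ℝ) (ha : ∀ n, 1 ≤ n → 0 < a n)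
    (pa1 : ℕ → ℝ)
    (h1 : pa1 1 = 1/p)
    (h2 : ∀ m, 1 ≤ m → pa1 (4*m-2) = -(p / a (2*m-1)))
    (h3 : ∀ m, 1 ≤ m → pa1 (4*m-1) = p / a (2*m-1))
    (h4 : ∀ m, 1 ≤ m → pa1 (4*m) = -(1/(p * a (2*m))))
    (h5 : ∀ m, 1 ≤ m → pa1 (4*m+1) = 1/(p * a (2*m)))
    (hconv : ∃ x, CFConvTo pa1 (fun n => if n = 0 then 0 else 1) x)
    (pb2 : ℕ → ℝ) (hpb2_0 : pb2 0 = 0)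
    (hq1 : ∀ n, n % 4 = 1 → pb2 n = p)
    (hq2 : ∀ n, 1 ≤ n → n % 4 = 2 → pb2 n = -(a (n/2) / p^2))
    (hq3 : ∀ n, n % 4 = 3 → pb2 n = -p)
    (hq4 : ∀ n, 1 ≤ n → n % 4 = 0 → pb2 n = a (n/2)) :
    ∃ y : ℝ,
      CFConvTo (fun _ => 1) (fun n => if n = 0 then 0 else a n) y ∧
      CFConvTo (fun _ => 1) pb2 (1/p + y) := by
  obtain ⟨x, hx⟩ := hconv
  have ha' : ∀ n, 1 ≤ n → a n ≠ 0 := fun n hn => (ha n hn).ne'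
  refine ⟨x - 1 / p, ?_, ?_⟩
  · have hodd := hx.comp <|
      StrictMono.tendsto_atTop (φ := fun n => 2 * n + 1) fun m n h => by dsimp only; omega
    simpa [CFConvTo] using (hodd.congr (odd_convergent_eq hp ha h1 h2 h3 h4 h5)).sub_const (1 / p)
  · rw [CFConvTo, add_sub_cancel]
    refine hx.congr fun n => (CFnum_div_CFden_eq (r := update pb2 0 1) (update_self _ _ _)
      (update_pb2_ne_zero hp ha' hq1 hq2 hq3 hq4) (fun n => ?_)
      (fun n => (update_mul_update_mul_pa1 hp ha' h1 h2 h3 h4 h5 hq1 hq2 hq3 hq4 n).symm) _).symm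
    rcases n with _ | n <;> simp [hpb2_0]
end

section
/- Suppose the infinite continued fraction [0; a, a+b, a+2b, ...] with a, b positive integers converges to L. Then for positive integers u, v, the continued fraction [0; ua, v(a+b), u(a+2b), v(a+3b), ...] converges to sqrt(v/u) · M, where M = [0; a', a'+b', ...] is the value of the continued fraction with a' = a·sqrt(uv), b' = b·sqrt(uv); equivalently, [0; ua, v(a+b), u(a+2b), v(a+3b), ...] = sqrt(v/u) · I_{a/b}(2/(b·sqrt(uv))) / I_{a/b - 1}(2/(b·sqrt(uv))), where I_ν(z) = \sum_{m=0}^∞ (z/2)^{ν+2m} / (Γ(m+1)Γ(ν+m+1)). -/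
open Filter Topology

/-- Modified Bessel function of the first kind. -/
noncomputable def besselI (ν z : ℝ) : ℝ :=
  ∑' m : ℕ, (z/2) ^ (ν + 2*(m : ℝ)) / (Real.Gamma (m+1) * Real.Gamma (ν + m + 1))



lemma besselI_term_pos {ν z : ℝ} (hν : 0 < ν + 1) (hz : 0 < z) (m : ℕ) :
    0 < (z/2) ^ (ν + 2*(m:ℝ)) / (Real.Gamma (m+1) * Real.Gamma (ν + m + 1)) := by
  have hm : (0:ℝ) ≤ m := Nat.cast_nonneg m
  apply div_pos (Real.rpow_pos_of_pos (by linarith) _)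
  exact mul_pos (Real.Gamma_pos_of_pos (by linarith)) (Real.Gamma_pos_of_pos (by linarith))

lemma besselI_summable {ν z : ℝ} (hν : 0 < ν + 1) (hz : 0 < z) :
    Summable (fun m : ℕ => (z/2) ^ (ν + 2*(m:ℝ)) / (Real.Gamma (m+1) * Real.Gamma (ν + m + 1))) := by
  set f : ℕ → ℝ := fun m => (z/2) ^ (ν + 2*(m:ℝ)) / (Real.Gamma (m+1) * Real.Gamma (ν + m + 1)) with hf
  have hq : (0:ℝ) < z/2 := by linarith
  have key : ∀ m : ℕ, ‖f (m+1)‖ / ‖f m‖ = (z/2)^(2:ℝ) / (((m:ℝ)+1) * (ν+m+1)) := by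
    intro m
    have hm : (0:ℝ) ≤ m := Nat.cast_nonneg m
    rw [Real.norm_eq_abs, Real.norm_eq_abs, abs_of_pos (besselI_term_pos hν hz _),
      abs_of_pos (besselI_term_pos hν hz _)]
    have e1 : ν + 2*(((m+1):ℕ):ℝ) = (ν + 2*(m:ℝ)) + 2 := by push_cast; ring
    have e2 : ((((m+1):ℕ)):ℝ) + 1 = ((m:ℝ)+1) + 1 := by push_cast; ring
    have e3 : ν + (((m+1):ℕ):ℝ) + 1 = (ν + (m:ℝ) + 1) + 1 := by push_cast; ring
    have h1 : Real.Gamma ((m:ℝ)+1) ≠ 0 := (Real.Gamma_pos_of_pos (by linarith)).ne'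
    have h2 : Real.Gamma (ν+(m:ℝ)+1) ≠ 0 := (Real.Gamma_pos_of_pos (by linarith)).ne'
    have h3 : (z/2) ^ (ν + 2*(m:ℝ)) ≠ 0 := (Real.rpow_pos_of_pos hq _).ne'
    have h4 : ((m:ℝ)+1) ≠ 0 := by positivity
    have h5 : (ν+(m:ℝ)+1) ≠ 0 := by linarith
    have hfm : f m ≠ 0 := (besselI_term_pos hν hz m).ne'
    have this1 : f (m+1) = f m * ((z/2)^(2:ℝ) / (((m:ℝ)+1)*(ν+(m:ℝ)+1))) := by
      simp only [hf, e1, e2, e3]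
      rw [Real.rpow_add hq, Real.Gamma_add_one (s := (m:ℝ)+1) (by positivity),
        Real.Gamma_add_one (s := ν+(m:ℝ)+1) (by linarith)]
      field_simp
    show f (m+1) / f m = (z/2)^(2:ℝ) / (((m:ℝ)+1)*(ν+(m:ℝ)+1))
    rw [this1, mul_comm, mul_div_assoc, div_self hfm, mul_one]
  apply summable_of_ratio_test_tendsto_lt_one (f := f) (l := 0) one_pos
    (Eventually.of_forall fun m => (besselI_term_pos hν hz m).ne')
  simp only [key]
  apply Tendsto.div_atTop tendsto_const_nhds
  apply Tendsto.atTop_mul_atTop₀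
  · exact tendsto_atTop_add_const_right _ _ tendsto_natCast_atTop_atTop
  · exact tendsto_atTop_add_const_right _ _
      (tendsto_atTop_add_const_left _ _ tendsto_natCast_atTop_atTop)

lemma besselI_pos {ν z : ℝ} (hν : 0 < ν + 1) (hz : 0 < z) : 0 < besselI ν z :=
  Summable.tsum_pos (besselI_summable hν hz) (fun m => (besselI_term_pos hν hz m).le) 0
    (besselI_term_pos hν hz 0)

lemma besselI_rec {ν z : ℝ} (hν : 0 < ν) (hz : 0 < z) :
    besselI (ν-1) z = (2*ν/z) * besselI ν z + besselI (ν+1) z := by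
  have hq : (0:ℝ) < z/2 := by linarith
  set L : ℕ → ℝ := fun m => (z/2) ^ ((ν-1) + 2*(m:ℝ)) / (Real.Gamma (m+1) * Real.Gamma ((ν-1) + m + 1)) with hLdef
  set M : ℕ → ℝ := fun m => (2*ν/z) * ((z/2) ^ (ν + 2*(m:ℝ)) / (Real.Gamma (m+1) * Real.Gamma (ν + m + 1))) with hMdef
  set N : ℕ → ℝ := fun m => (z/2) ^ ((ν+1) + 2*(m:ℝ)) / (Real.Gamma (m+1) * Real.Gamma ((ν+1) + m + 1)) with hNdef
  have hL : Summable L := besselI_summable (by linarith) hz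
  have hM : Summable M := (besselI_summable (by linarith) hz).mul_left _
  have hN : Summable N := besselI_summable (by linarith) hz
  have hL0 : L 0 = M 0 := by
    have h1 : Real.Gamma ν ≠ 0 := (Real.Gamma_pos_of_pos hν).ne'
    have h2 : Real.Gamma (0+1 : ℝ) ≠ 0 := (Real.Gamma_pos_of_pos (by norm_num)).ne'
    simp only [hLdef, hMdef, Nat.cast_zero, mul_zero, add_zero]
    rw [show ν - 1 + 1 = ν by ring, Real.Gamma_add_one hν.ne',
      Real.rpow_sub hq, Real.rpow_one]
    field_simp
  have hkey : ∀ m : ℕ, L (m+1) = M (m+1) + N m := by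
    intro m
    have hm : (0:ℝ) ≤ m := Nat.cast_nonneg m
    have h1 : Real.Gamma ((m:ℝ)+1) ≠ 0 := (Real.Gamma_pos_of_pos (by linarith)).ne'
    have h2 : Real.Gamma (ν+(m:ℝ)+1) ≠ 0 := (Real.Gamma_pos_of_pos (by linarith)).ne'
    simp only [hLdef, hMdef, hNdef, Nat.cast_add, Nat.cast_one]
    rw [show (ν-1) + 2*((m:ℝ)+1) = ((ν-1) + 2*(m:ℝ)) + 2 by ring,
      show ν + 2*((m:ℝ)+1) = ((ν-1) + 2*(m:ℝ)) + 3 by ring,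
      show (ν+1) + 2*(m:ℝ) = ((ν-1) + 2*(m:ℝ)) + 2 by ring,
      show (m:ℝ)+1+1 = ((m:ℝ)+1)+1 by ring,
      show (ν-1) + ((m:ℝ)+1) + 1 = (ν+(m:ℝ)+1 : ℝ) by ring,
      show ν + ((m:ℝ)+1) + 1 = (ν+(m:ℝ)+1) + 1 by ring,
      show (ν+1) + (m:ℝ) + 1 = (ν+(m:ℝ)+1) + 1 by ring,
      Real.Gamma_add_one (s := (m:ℝ)+1) (by positivity),
      Real.Gamma_add_one (s := ν+(m:ℝ)+1) (by linarith),
      Real.rpow_add hq, Real.rpow_add hq ((ν-1) + 2*(m:ℝ)) 3]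
    rw [show (3:ℝ) = 2 + 1 by norm_num, Real.rpow_add hq 2 1, Real.rpow_one]
    have h3 : (z/2) ^ ((ν-1) + 2*(m:ℝ)) ≠ 0 := (Real.rpow_pos_of_pos hq _).ne'
    have h4 : (z/2) ^ (2:ℝ) ≠ 0 := (Real.rpow_pos_of_pos hq _).ne'
    field_simp
    ring
  have hLsum : ∑' m, L m = L 0 + ∑' m, L (m+1) := Summable.tsum_eq_zero_add hL
  have hMsum : ∑' m, M m = M 0 + ∑' m, M (m+1) := Summable.tsum_eq_zero_add hM
  have hMs : Summable (fun m => M (m+1)) := (summable_nat_add_iff 1).2 hM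
  have calc1 : ∑' m, L m = ∑' m, M m + ∑' m, N m := by
    rw [hLsum, hMsum, hL0]
    rw [tsum_congr hkey, Summable.tsum_add hMs hN]
    ring
  have eM : ∑' m, M m = (2*ν/z) * besselI ν z := by
    simp only [hMdef]; rw [tsum_mul_left]; rfl
  have eL : besselI (ν-1) z = ∑' m, L m := rfl
  have eN : besselI (ν+1) z = ∑' m, N m := rfl
  rw [eL, eN, ← eM]
  exact calc1

set_option maxHeartbeats 2000000 in
theorem stmt15 (a b u v : ℕ) (ha : 0 < a) (hb : 0 < b) (hu : 0 < u) (hv : 0 < v)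
    (L : ℝ)
    (hL : CFConvTo (fun _ => 1)
      (fun n => if n = 0 then 0 else (a : ℝ) + ((n : ℝ) - 1) * b) L) :
    CFConvTo (fun _ => 1)
      (fun n => if n = 0 then 0 else
        (if n % 2 = 1 then (u : ℝ) else (v : ℝ)) * ((a : ℝ) + ((n : ℝ) - 1) * b))
      (Real.sqrt ((v : ℝ)/u) *
        (besselI ((a : ℝ)/b) (2/((b : ℝ) * Real.sqrt ((u : ℝ) * v))) /
          besselI ((a : ℝ)/b - 1) (2/((b : ℝ) * Real.sqrt ((u : ℝ) * v))))) := by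
  clear hL
  have hu' : (0:ℝ) < u := by exact_mod_cast hu
  have hv' : (0:ℝ) < v := by exact_mod_cast hv
  have hb'' : (0:ℝ) < b := by exact_mod_cast hb
  have ha' : (1:ℝ) ≤ a := by exact_mod_cast ha
  have hb' : (1:ℝ) ≤ b := by exact_mod_cast hb
  have hu1 : (1:ℝ) ≤ u := by exact_mod_cast hu
  have hv1 : (1:ℝ) ≤ v := by exact_mod_cast hv
  have hu0 : (u:ℝ) ≠ 0 := hu'.ne'
  set s : ℝ := Real.sqrt ((u:ℝ) * v) with hs
  set w : ℝ := Real.sqrt ((v:ℝ) / u) with hw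
  have hspos : 0 < s := Real.sqrt_pos.2 (by positivity)
  have hwpos : 0 < w := Real.sqrt_pos.2 (by positivity)
  have huw : (u:ℝ) * w = s := by
    rw [hw, hs, show (u:ℝ)*v = (u:ℝ)^2 * ((v:ℝ)/u) by field_simp,
      Real.sqrt_mul (by positivity) _, Real.sqrt_sq hu'.le]
  have hws : w * s = v := by
    rw [hw, hs, ← Real.sqrt_mul (by positivity) _,
      show (v:ℝ)/u * ((u:ℝ)*v) = (v:ℝ)^2 by field_simp]
    exact Real.sqrt_sq hv'.le
  set z : ℝ := 2 / ((b:ℝ) * s) with hz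
  have hzpos : 0 < z := by positivity
  set ν₀ : ℝ := (a:ℝ)/b with hν₀
  have hν₀pos : 0 < ν₀ := by positivity
  set pa : ℕ → ℝ := (fun _ => 1 : ℕ → ℝ) with hpa
  set pb : ℕ → ℝ := (fun n => if n = 0 then 0 else
      (if n % 2 = 1 then (u : ℝ) else (v : ℝ)) * ((a : ℝ) + ((n : ℝ) - 1) * b)) with hpbdef
  set F : ℕ → ℝ := fun n => (if n % 2 = 1 then w else 1) * besselI (ν₀ - 1 + n) z with hFdef
  have hFpos : ∀ n : ℕ, 0 < F n := by
    intro n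
    have hn0 : (0:ℝ) ≤ (n:ℝ) := Nat.cast_nonneg n
    have h1 : 0 < besselI (ν₀ - 1 + n) z := besselI_pos (by linarith) hzpos
    have hρ : 0 < (if n % 2 = 1 then w else 1) := by
      split
      · exact hwpos
      · norm_num
    exact mul_pos hρ h1
  have hpb1 : ∀ n : ℕ, 1 ≤ pb (n+1) := by
    intro n
    have hn0 : (0:ℝ) ≤ (n:ℝ) := Nat.cast_nonneg n
    simp only [hpbdef]
    rw [if_neg (Nat.succ_ne_zero n)]
    have h1 : (1:ℝ) ≤ (if (n+1) % 2 = 1 then (u:ℝ) else v) := by split <;> assumption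
    push_cast
    nlinarith [mul_nonneg hn0 (by linarith : (0:ℝ) ≤ (b:ℝ))]
  have hFrec : ∀ n : ℕ, F n = pb (n+1) * F (n+1) + F (n+2) := by
    intro n
    have hn0 : (0:ℝ) ≤ (n:ℝ) := Nat.cast_nonneg n
    have hrec := besselI_rec (ν := ν₀ + n) (by linarith) hzpos
    have hcoef : 2*(ν₀+n)/z = ((a:ℝ) + (n:ℝ)*b) * s := by
      rw [hz, hν₀]
      field_simp
    rw [hcoef] at hrec
    have e1 : ν₀ - 1 + (((n+1):ℕ):ℝ) = ν₀ + n := by push_cast; ring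
    have e2 : ν₀ - 1 + (((n+2):ℕ):ℝ) = ν₀ + n + 1 := by push_cast; ring
    have e0 : ν₀ - 1 + (n:ℝ) = ν₀ + n - 1 := by ring
    have eF0 : F n = (if n % 2 = 1 then w else 1) *
        (((a:ℝ) + (n:ℝ)*b) * s * besselI (ν₀+n) z + besselI (ν₀+n+1) z) := by
      simp only [hFdef]
      rw [e0, hrec]
    have eF1 : F (n+1) = (if (n+1) % 2 = 1 then w else 1) * besselI (ν₀ + n) z := by
      simp only [hFdef]
      rw [e1]
    have eF2 : F (n+2) = (if n % 2 = 1 then w else 1) * besselI (ν₀ + n + 1) z := by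
      simp only [hFdef]
      rw [e2, Nat.add_mod_right]
    have epb : pb (n+1) = (if (n+1) % 2 = 1 then (u:ℝ) else v) * ((a:ℝ) + (n:ℝ)*b) := by
      simp only [hpbdef]
      rw [if_neg (Nat.succ_ne_zero n)]
      congr 1
      push_cast
      ring
    rw [eF0, eF1, eF2, epb]
    rcases Nat.even_or_odd n with hpar | hpar
    · have h0 : n % 2 = 0 := Nat.even_iff.mp hpar
      have hn2 : ¬ n % 2 = 1 := by omega
      have hn2' : (n+1) % 2 = 1 := by omega
      simp only [if_neg hn2, if_pos hn2']
      linear_combination (((a:ℝ) + (n:ℝ)*b) * besselI (ν₀+n) z) * huw.symm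
    · have hn2 : n % 2 = 1 := Nat.odd_iff.mp hpar
      have hn2' : ¬ (n+1) % 2 = 1 := by omega
      simp only [if_pos hn2, if_neg hn2']
      linear_combination (((a:ℝ) + (n:ℝ)*b) * besselI (ν₀+n) z) * hws
  have hFdec : ∀ n, F (n+1) ≤ F n := by
    intro n
    nlinarith [hFrec n, hFpos (n+1), hFpos (n+2), hpb1 n]
  have hFle : ∀ n, F n ≤ F 0 := by
    intro n
    induction n with
    | zero => exact le_refl _
    | succ k ih => exact (hFdec k).trans ih
  have hA : ∀ n, F 1 = CFnum pa pb (n+1) * F n + CFnum pa pb n * F (n+1) := by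
    intro n
    induction n with
    | zero => simp [CFnum, hpbdef]
    | succ k ih =>
      have hk := hFrec k
      simp only [CFnum, hpa]
      rw [ih, hk]
      ring
  have hB : ∀ n, F 0 = CFden pa pb (n+1) * F n + CFden pa pb n * F (n+1) := by
    intro n
    induction n with
    | zero => simp [CFden]
    | succ k ih =>
      have hk := hFrec k
      simp only [CFden, hpa]
      rw [ih, hk]
      ring
  have hdet : ∀ n, CFnum pa pb n * CFden pa pb (n+1) - CFnum pa pb (n+1) * CFden pa pb n
      = (-1:ℝ)^n := by
    intro n
    induction n with
    | zero => simp [CFnum, CFden, hpbdef]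
    | succ k ih =>
      simp only [CFnum, CFden, hpa]
      rw [pow_succ]
      linear_combination (-1:ℝ) * ih
  have hBaux : ∀ n, 0 < CFden pa pb (n+1) ∧ 0 ≤ CFden pa pb n := by
    intro n
    induction n with
    | zero =>
      constructor
      · norm_num [CFden]
      · norm_num [CFden]
    | succ k ih =>
      refine ⟨?_, ih.1.le⟩
      simp only [CFden, hpa]
      nlinarith [hpb1 k, ih.1, ih.2]
  have hB1 : ∀ n, 1 ≤ CFden pa pb (n+1) := by
    intro n
    induction n with
    | zero => norm_num [CFden]
    | succ k ih =>
      simp only [CFden, hpa]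
      nlinarith [hpb1 k, (hBaux k).1, (hBaux k).2, ih]
  have hBgrow : ∀ n : ℕ, (n:ℝ) ≤ CFden pa pb (n+2) := by
    intro n
    have hn0 : (0:ℝ) ≤ (n:ℝ) := Nat.cast_nonneg n
    have h1 := hB1 n
    have h2 := (hBaux n).2
    have h3 : (n:ℝ) ≤ pb (n+1) := by
      simp only [hpbdef]
      rw [if_neg (Nat.succ_ne_zero n), show (((n+1):ℕ):ℝ) - 1 = (n:ℝ) by push_cast; ring]
      have hc : (1:ℝ) ≤ (if (n+1)%2 = 1 then (u:ℝ) else v) := by split <;> assumption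
      have hbase : (n:ℝ) ≤ (a:ℝ) + (n:ℝ)*b := by
        nlinarith [mul_nonneg hn0 (by linarith : (0:ℝ) ≤ (b:ℝ) - 1)]
      calc (n:ℝ) ≤ (a:ℝ) + (n:ℝ)*b := hbase
        _ = 1 * ((a:ℝ) + (n:ℝ)*b) := (one_mul _).symm
        _ ≤ (if (n+1)%2 = 1 then (u:ℝ) else v) * ((a:ℝ) + (n:ℝ)*b) := by
            apply mul_le_mul_of_nonneg_right hc
            nlinarith [mul_nonneg hn0 (by linarith : (0:ℝ) ≤ (b:ℝ))]
    simp only [CFden, hpa]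
    have h4 : pb (n+1) * 1 ≤ pb (n+1) * CFden pa pb (n+1) :=
      mul_le_mul_of_nonneg_left h1 (zero_le_one.trans (hpb1 n))
    linarith
  -- the target value equals F 1 / F 0
  have hF0 : F 0 = besselI (ν₀ - 1) z := by
    simp only [hFdef]
    norm_num
  have hF1 : F 1 = w * besselI ν₀ z := by
    simp only [hFdef]
    rw [show ν₀ - 1 + ((1:ℕ):ℝ) = ν₀ by push_cast; ring]
    norm_num
  have hF0pos : 0 < F 0 := hFpos 0
  rw [CFConvTo]
  have hT : w * (besselI ν₀ z / besselI (ν₀-1) z) = F 1 / F 0 := by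
    rw [hF0, hF1, mul_div_assoc]
  rw [hT]
  have hest : ∀ n : ℕ, |CFnum pa pb (n+1) / CFden pa pb (n+1) - F 1 / F 0|
      = F (n+1) / (CFden pa pb (n+1) * F 0) := by
    intro n
    have hBp := (hBaux n).1
    have hdiff : CFnum pa pb (n+1) / CFden pa pb (n+1) - F 1 / F 0
        = ((-1:ℝ)^(n+1) * F (n+1)) / (CFden pa pb (n+1) * F 0) := by
      rw [div_sub_div _ _ hBp.ne' hF0pos.ne']
      congr 1
      linear_combination CFnum pa pb (n+1) * hB n - CFden pa pb (n+1) * hA n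
        - F (n+1) * hdet n
    rw [hdiff, abs_div, abs_mul, abs_pow, abs_neg, abs_one, one_pow, one_mul,
      abs_of_pos (hFpos (n+1)), abs_of_pos (mul_pos hBp hF0pos)]
  have hgt : Tendsto (fun n : ℕ => 1/((n:ℝ)-1)) atTop (𝓝 0) := by
    have h := (tendsto_atTop_add_const_right atTop (-1:ℝ)
      tendsto_natCast_atTop_atTop).inv_tendsto_atTop
    simpa [one_div, sub_eq_add_neg, Pi.inv_def] using h
  have hsub : Tendsto (fun n : ℕ => CFnum pa pb (n+1) / CFden pa pb (n+1) - F 1 / F 0)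
      atTop (𝓝 0) := by
    apply squeeze_zero_norm' _ hgt
    filter_upwards [eventually_ge_atTop 2] with n hn
    obtain ⟨m, rfl⟩ : ∃ m, n = m + 1 := ⟨n - 1, by omega⟩
    have hm1 : (1:ℝ) ≤ (m:ℝ) := by
      have : 1 ≤ m := by omega
      exact_mod_cast this
    rw [Real.norm_eq_abs, hest (m+1)]
    have hle1 : F (m+1+1) ≤ F 0 := hFle _
    have hle2 : (m:ℝ) * F 0 ≤ CFden pa pb (m+1+1) * F 0 := by
      apply mul_le_mul_of_nonneg_right (hBgrow m) hF0pos.le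
    have hmf : (0:ℝ) < (m:ℝ) * F 0 := by positivity
    calc F (m+1+1) / (CFden pa pb (m+1+1) * F 0) ≤ F 0 / ((m:ℝ) * F 0) :=
          div_le_div₀ hF0pos.le hle1 hmf hle2
      _ = 1 / (m:ℝ) := by
          rw [mul_comm, ← div_div, div_self hF0pos.ne']
      _ = 1 / ((((m+1) : ℕ) : ℝ) - 1) := by push_cast; ring_nf
  have := hsub.add_const (F 1 / F 0)
  simpa using this
end

section
/- Let a and b be positive integers. Then the infinite regular continued fraction [0; a, a+b, a+2b, a+3b, ...] converges and equals (1/b) · (\sum_{k=0}^∞ b^{-2k} / ((a/b)_{k+1} k!)) / (\sum_{k=0}^∞ b^{-2k} / ((a/b)_k k!)), where (x)_0 = 1 and (x)_k = x(x+1)···(x+k-1). -/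
open Filter Topology

/-- The rising factorial (Pochhammer symbol) `(x)ₖ = x(x+1)⋯(x+k-1)`. -/
noncomputable def risingFac (x : ℝ) (k : ℕ) : ℝ := ∏ j ∈ Finset.range k, (x + j)


/-! With `c = a/b` and `z = b⁻²`, the tails of the continued fraction are ratios of values of
`F c = ₀F₁(; c; z)`: the contiguous relation `F c = F (c+1) + z / (c (c+1)) * F (c+2)` says exactly
that `uₙ = F (c+n+1) / (b (c+n) F (c+n))` satisfies `uₙ = 1 / ((a + n b) + uₙ₊₁)`. For any positive
tails of a continued fraction `b₀ + K(1/bₙ)` with `bₙ ≥ 1`, the error `(b₀ + u₀) Bₙ - Aₙ` is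
multiplied by `-uₙ ∈ (-1, 0)` at each step, while `Bₙ` dominates the Fibonacci numbers; hence the
convergents `Aₙ / Bₙ` tend to `b₀ + u₀`. -/

section ContinuedFraction

variable {pb : ℕ → ℝ}

lemma fib_le_CFden (hpb : ∀ n, 1 ≤ pb (n + 1)) : ∀ n, (Nat.fib n : ℝ) ≤ CFden (fun _ => 1) pb n
  | 0 => by simp [CFden]
  | 1 => by simp [CFden]
  | n + 2 => by
    have h₀ := fib_le_CFden hpb n
    have h₁ := fib_le_CFden hpb (n + 1)
    have h₁' : 0 ≤ CFden (fun _ => 1) pb (n + 1) := (Nat.cast_nonneg _).trans h₁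
    rw [Nat.fib_add_two, Nat.cast_add, CFden, one_mul]
    nlinarith [hpb n]

lemma tendsto_CFden_atTop (hpb : ∀ n, 1 ≤ pb (n + 1)) :
    Tendsto (CFden (fun _ => 1) pb) atTop atTop := by
  refine tendsto_atTop_mono (fib_le_CFden hpb) ?_
  have : Tendsto (fun n => Nat.fib (n + 2)) atTop atTop := Nat.fib_add_two_strictMono.tendsto_atTop
  exact tendsto_natCast_atTop_atTop.comp ((tendsto_add_atTop_iff_nat 2).mp this)

variable {u : ℕ → ℝ}

lemma CFden_mul_sub_CFnum_succ (htail : ∀ n, u n * (pb (n + 1) + u (n + 1)) = 1) (n : ℕ) :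
    (pb 0 + u 0) * CFden (fun _ => 1) pb (n + 1) - CFnum (fun _ => 1) pb (n + 1) =
      -u n * ((pb 0 + u 0) * CFden (fun _ => 1) pb n - CFnum (fun _ => 1) pb n) := by
  induction n with
  | zero => simp [CFden, CFnum]
  | succ n ih =>
    simp only [CFden, CFnum, one_mul]
    linear_combination (pb (n + 1) + u (n + 1)) * ih -
      ((pb 0 + u 0) * CFden (fun _ => 1) pb n - CFnum (fun _ => 1) pb n) * htail n

lemma abs_CFden_mul_sub_CFnum_le_one (hpb : ∀ n, 1 ≤ pb (n + 1)) (hu : ∀ n, 0 < u n)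
    (htail : ∀ n, u n * (pb (n + 1) + u (n + 1)) = 1) (n : ℕ) :
    |(pb 0 + u 0) * CFden (fun _ => 1) pb n - CFnum (fun _ => 1) pb n| ≤ 1 := by
  induction n with
  | zero => simp [CFden, CFnum]
  | succ n ih =>
    have hun : u n ≤ 1 :=
      calc u n = u n * 1 := (mul_one _).symm
        _ ≤ u n * (pb (n + 1) + u (n + 1)) :=
          mul_le_mul_of_nonneg_left (by linarith [hpb n, hu (n + 1)]) (hu n).le
        _ = 1 := htail n
    rw [CFden_mul_sub_CFnum_succ htail, abs_mul, abs_neg, abs_of_pos (hu n)]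
    exact mul_le_one₀ hun (abs_nonneg _) ih

theorem CFConvTo_of_tails (hpb : ∀ n, 1 ≤ pb (n + 1)) (hu : ∀ n, 0 < u n)
    (htail : ∀ n, u n * (pb (n + 1) + u (n + 1)) = 1) :
    CFConvTo (fun _ => 1) pb (pb 0 + u 0) := by
  have hden : Tendsto (fun n => CFden (fun _ => 1) pb (n + 1)) atTop atTop :=
    (tendsto_add_atTop_iff_nat 1).mpr (tendsto_CFden_atTop hpb)
  rw [CFConvTo, ← tendsto_sub_nhds_zero_iff]
  refine squeeze_zero_norm' ?_ hden.inv_tendsto_atTop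
  filter_upwards [hden.eventually_gt_atTop 0] with n hn
  rw [Real.norm_eq_abs, Pi.inv_apply, div_sub' hn.ne', abs_div, abs_sub_comm, abs_of_pos hn,
    mul_comm, ← one_div]
  exact div_le_div_of_nonneg_right (abs_CFden_mul_sub_CFnum_le_one hpb hu htail _) hn.le

end ContinuedFraction

section RisingFac

lemma risingFac_zero (x : ℝ) : risingFac x 0 = 1 := Finset.prod_range_zero _

lemma risingFac_succ (x : ℝ) (k : ℕ) : risingFac x (k + 1) = risingFac x k * (x + k) :=
  Finset.prod_range_succ _ _

lemma risingFac_succ' (x : ℝ) (k : ℕ) : risingFac x (k + 1) = x * risingFac (x + 1) k := by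
  simp only [risingFac, Finset.prod_range_succ', Nat.cast_add, Nat.cast_one, Nat.cast_zero,
    add_zero, ← add_assoc, add_right_comm _ (1 : ℝ)]
  ring

lemma risingFac_pos {x : ℝ} (hx : 0 < x) (k : ℕ) : 0 < risingFac x k :=
  Finset.prod_pos fun j _ => by positivity

lemma min_le_risingFac {x : ℝ} (hx : 0 < x) : ∀ k, min x 1 ≤ risingFac x k
  | 0 => by simp [risingFac_zero]
  | k + 1 => by
    have : 1 ≤ risingFac (x + 1) k :=
      Finset.one_le_prod fun j _ => by linarith [j.cast_nonneg (α := ℝ)]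
    rw [risingFac_succ']
    nlinarith [min_le_left x 1]

end RisingFac

section ZeroFOne

noncomputable def zeroFOneTerm (c z : ℝ) (k : ℕ) : ℝ := z ^ k / (risingFac c k * k.factorial)

/-- The confluent hypergeometric limit function `₀F₁(; c; z) = ∑ zᵏ / ((c)ₖ k!)`. -/
noncomputable def zeroFOne (c z : ℝ) : ℝ := ∑' k, zeroFOneTerm c z k

variable {c z : ℝ}

lemma zeroFOneTerm_zero : zeroFOneTerm c z 0 = 1 := by simp [zeroFOneTerm, risingFac_zero]

lemma summable_zeroFOneTerm (hc : 0 < c) : Summable (zeroFOneTerm c z) := by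
  refine .of_norm_bounded ((Real.summable_pow_div_factorial |z|).mul_left (min c 1)⁻¹) fun k => ?_
  have hm : 0 < min c 1 := lt_min hc one_pos
  rw [zeroFOneTerm, norm_div, norm_pow, Real.norm_eq_abs, norm_mul,
    Real.norm_of_nonneg (risingFac_pos hc k).le, Real.norm_natCast, mul_comm, ← div_div,
    inv_mul_eq_div]
  exact div_le_div_of_nonneg_left (by positivity) hm (min_le_risingFac hc k)

lemma zeroFOne_pos (hc : 0 < c) (hz : 0 ≤ z) : 0 < zeroFOne c z :=
  (summable_zeroFOneTerm hc).tsum_pos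
    (fun k => by have := risingFac_pos hc k; unfold zeroFOneTerm; positivity) 0
    (by simp [zeroFOneTerm_zero])

lemma zeroFOneTerm_succ_sub (hc : 0 < c) (k : ℕ) :
    zeroFOneTerm c z (k + 1) - zeroFOneTerm (c + 1) z (k + 1) =
      z / (c * (c + 1)) * zeroFOneTerm (c + 2) z k := by
  have hrf : risingFac (c + 2) k = risingFac (c + 1) k * (c + 1 + k) / (c + 1) := by
    rw [eq_div_iff (by positivity), ← risingFac_succ, risingFac_succ', add_assoc, one_add_one_eq_two,
      mul_comm]
  have := risingFac_pos (by linarith : 0 < c + 1) k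
  simp only [zeroFOneTerm]
  rw [risingFac_succ' c, risingFac_succ, hrf, Nat.factorial_succ]
  push_cast
  field_simp
  ring

lemma zeroFOne_eq_add (hc : 0 < c) :
    zeroFOne c z = zeroFOne (c + 1) z + z / (c * (c + 1)) * zeroFOne (c + 2) z := by
  have hs {c' : ℝ} (hc' : 0 < c') : Summable fun k => zeroFOneTerm c' z (k + 1) :=
    (summable_nat_add_iff 1).mpr (summable_zeroFOneTerm hc')
  rw [zeroFOne, zeroFOne, zeroFOne, tsum_eq_zero_add' (hs hc), tsum_eq_zero_add' (hs (by linarith)),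
    zeroFOneTerm_zero, zeroFOneTerm_zero, add_assoc, add_left_cancel_iff, ← sub_eq_iff_eq_add',
    ← (hs hc).tsum_sub (hs (by linarith)), ← tsum_mul_left]
  exact tsum_congr (zeroFOneTerm_succ_sub hc)

noncomputable def zeroFOneRatio (c z : ℝ) : ℝ := zeroFOne (c + 1) z / (c * zeroFOne c z)

lemma zeroFOneRatio_pos (hc : 0 < c) (hz : 0 ≤ z) : 0 < zeroFOneRatio c z :=
  div_pos (zeroFOne_pos (by linarith) hz) (mul_pos hc (zeroFOne_pos hc hz))

lemma zeroFOneRatio_mul_add (hc : 0 < c) (hz : 0 ≤ z) :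
    zeroFOneRatio c z * (c + z * zeroFOneRatio (c + 1) z) = 1 := by
  have h₀ := zeroFOne_pos hc hz
  have h₁ := zeroFOne_pos (by linarith : 0 < c + 1) hz
  rw [zeroFOneRatio, zeroFOneRatio, add_assoc, one_add_one_eq_two]
  field_simp
  rw [zeroFOne_eq_add hc]
  field_simp

end ZeroFOne

theorem stmt16 (a b : ℕ) (ha : 0 < a) (hb : 0 < b) :
    CFConvTo (fun _ => 1)
      (fun n => if n = 0 then 0 else (a : ℝ) + ((n : ℝ) - 1) * b)
      ((1/(b : ℝ)) *
        ((∑' k : ℕ, ((b : ℝ)^(2*k))⁻¹ / (risingFac ((a : ℝ)/b) (k+1) * Nat.factorial k)) /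
          (∑' k : ℕ, ((b : ℝ)^(2*k))⁻¹ / (risingFac ((a : ℝ)/b) k * Nat.factorial k)))) := by
  have hb' : (0 : ℝ) < b := by exact_mod_cast hb
  set c : ℝ := a / b with hc_def
  have hc : 0 < c := div_pos (by exact_mod_cast ha) hb'
  have hz : (0 : ℝ) ≤ ((b : ℝ) ^ 2)⁻¹ := by positivity
  have hpow (k : ℕ) : ((b : ℝ) ^ (2 * k))⁻¹ = ((b : ℝ) ^ 2)⁻¹ ^ k := by rw [pow_mul, inv_pow]
  have hden : ∑' k : ℕ, ((b : ℝ) ^ (2 * k))⁻¹ / (risingFac c k * k.factorial) =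
      zeroFOne c ((b : ℝ) ^ 2)⁻¹ :=
    tsum_congr fun k => by rw [hpow, zeroFOneTerm]
  have hnum : ∑' k : ℕ, ((b : ℝ) ^ (2 * k))⁻¹ / (risingFac c (k + 1) * k.factorial) =
      c⁻¹ * zeroFOne (c + 1) ((b : ℝ) ^ 2)⁻¹ := by
    rw [zeroFOne, ← tsum_mul_left]
    refine tsum_congr fun k => ?_
    rw [hpow, risingFac_succ', zeroFOneTerm, mul_assoc, ← div_div, div_right_comm, inv_mul_eq_div]
  have hquot (n : ℕ) : (if n + 1 = 0 then 0 else (a : ℝ) + (((n + 1 : ℕ) : ℝ) - 1) * b) =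
      b * (c + n) := by
    rw [if_neg n.succ_ne_zero, hc_def, mul_add, mul_div_cancel₀ _ hb'.ne']
    push_cast
    ring
  have hcn (n : ℕ) : 0 < c + n := by positivity
  convert CFConvTo_of_tails (pb := fun n => if n = 0 then 0 else (a : ℝ) + ((n : ℝ) - 1) * b)
    (u := fun n => zeroFOneRatio (c + n) ((b : ℝ) ^ 2)⁻¹ / b) (fun n => ?_)
    (fun n => div_pos (zeroFOneRatio_pos (hcn n) hz) hb') (fun n => ?_) using 1
  · rw [hnum, hden, zeroFOneRatio]
    simp only [one_div, ↓reduceIte, Nat.cast_zero, add_zero, zero_add]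
    field_simp
  · rw [hquot, mul_add, hc_def, mul_div_cancel₀ _ hb'.ne']
    have : (1 : ℝ) ≤ a := by exact_mod_cast ha
    have : (0 : ℝ) ≤ b * n := by positivity
    linarith
  · have := zeroFOneRatio_mul_add (hcn n) hz
    rw [hquot, Nat.cast_succ, ← add_assoc]
    field_simp at this ⊢
    linear_combination this
end

section
/- For a positive integer s, the infinite regular continued fraction [0; 2s, 6s, 10s, 14s, ...] (with n-th partial quotient (4n+2)s for n ≥ 0) converges to (e^{1/s} - 1)/(e^{1/s} + 1) = tanh(1/(2s)). -/
open Filter Topology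

noncomputable def myT (x : ℝ) (n k : ℕ) : ℝ :=
  2^n * (Nat.factorial (n+k)) * x^(2*k+n) / ((Nat.factorial k) * (Nat.factorial (2*n+2*k)))

lemma myT_nonneg {x : ℝ} (hx : 0 ≤ x) (n k : ℕ) : 0 ≤ myT x n k := by
  unfold myT; positivity

lemma myT_le {x : ℝ} (hx : 0 ≤ x) (n k : ℕ) :
    myT x n k ≤ (2^n * x^n) * ((x^2)^k / Nat.factorial k) := by
  have heq : myT x n k
      = ((2^n * x^n) * ((x^2)^k / Nat.factorial k)) * ((Nat.factorial (n+k)) / (Nat.factorial (2*n+2*k))) := by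
    unfold myT
    have : x^(2*k+n) = x^n * (x^2)^k := by rw [← pow_mul, ← pow_add]; ring_nf
    rw [this]
    field_simp
  rw [heq]
  have h1 : ((Nat.factorial (n+k)) : ℝ) / (Nat.factorial (2*n+2*k)) ≤ 1 := by
    rw [div_le_one (by positivity)]
    exact_mod_cast Nat.factorial_le (by omega)
  calc _ ≤ ((2^n * x^n) * ((x^2)^k / Nat.factorial k)) * 1 :=
        mul_le_mul_of_nonneg_left h1 (by positivity)
    _ = _ := by ring

lemma myT_summable {x : ℝ} (hx : 0 ≤ x) (n : ℕ) : Summable (myT x n) := by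
  apply Summable.of_nonneg_of_le (myT_nonneg hx n) (myT_le hx n)
  exact (Real.summable_pow_div_factorial (x^2)).mul_left _

noncomputable def myF (x : ℝ) (n : ℕ) : ℝ := ∑' k, myT x n k

lemma myF_pos {x : ℝ} (hx : 0 < x) (n : ℕ) : 0 < myF x n := by
  refine Summable.tsum_pos (myT_summable hx.le n) (myT_nonneg hx.le n) 0 ?_
  unfold myT; positivity

lemma myT_rec0 (x : ℝ) (hx : x ≠ 0) (n : ℕ) :
    myT x n 0 = ((2*(n:ℝ)+1)/x) * myT x (n+1) 0 := by
  unfold myT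
  have h1 : 2*(n+1)+2*0 = (2*n+2*0+1)+1 := by ring
  have h2 : (n+1)+0 = (n+0)+1 := by ring
  have h3 : 2*0+(n+1) = (2*0+n)+1 := by ring
  rw [h1, h2, h3]
  simp only [Nat.factorial_succ, pow_succ]
  have hf1 : ((Nat.factorial (n+0)):ℝ) ≠ 0 := by exact_mod_cast Nat.factorial_ne_zero _
  have hf2 : ((Nat.factorial (2*n+2*0)):ℝ) ≠ 0 := by exact_mod_cast Nat.factorial_ne_zero _
  push_cast
  field_simp
  ring

lemma myT_recS (x : ℝ) (hx : x ≠ 0) (n k : ℕ) :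
    myT x n (k+1) = ((2*(n:ℝ)+1)/x) * myT x (n+1) (k+1) + myT x (n+2) k := by
  unfold myT
  have h1 : 2*(n+1)+2*(k+1) = ((2*n+2*(k+1))+1)+1 := by ring
  have h2 : 2*(n+2)+2*k = ((2*n+2*(k+1))+1)+1 := by ring
  have h3 : (n+1)+(k+1) = (n+(k+1))+1 := by ring
  have h4 : (n+2)+k = (n+(k+1))+1 := by ring
  have h5 : 2*(k+1)+(n+1) = (2*(k+1)+n)+1 := by ring
  have h6 : 2*k+(n+2) = 2*(k+1)+n := by ring
  rw [h1, h2, h3, h4, h5, h6]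
  simp only [Nat.factorial_succ, pow_succ]
  have hf1 : ((Nat.factorial (n+(k+1))):ℝ) ≠ 0 := by exact_mod_cast Nat.factorial_ne_zero _
  have hf2 : ((Nat.factorial (2*n+2*(k+1))):ℝ) ≠ 0 := by exact_mod_cast Nat.factorial_ne_zero _
  have hf3 : ((Nat.factorial k):ℝ) ≠ 0 := by exact_mod_cast Nat.factorial_ne_zero _
  have hk1 : ((k:ℝ)+1) ≠ 0 := by positivity
  have hq1 : (2*(n:ℝ)+2*((k:ℝ)+1)+1) ≠ 0 := by positivity
  have hq2 : (2*(n:ℝ)+2*((k:ℝ)+1)+1+1) ≠ 0 := by positivity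
  push_cast
  field_simp
  ring

lemma myF_rec {x : ℝ} (hx : 0 < x) (n : ℕ) :
    myF x n = ((2*(n:ℝ)+1)/x) * myF x (n+1) + myF x (n+2) := by
  classical
  set g : ℕ → ℝ := fun k => if k = 0 then 0 else myT x (n+2) (k-1) with hg
  have hgs : Summable g := by
    apply (summable_nat_add_iff 1).mp
    simpa [hg] using myT_summable hx.le (n+2)
  have hterm : ∀ k, myT x n k = ((2*(n:ℝ)+1)/x) * myT x (n+1) k + g k := by
    rintro (_|k)
    · simp [hg, myT_rec0 x hx.ne' n]
    · simp [hg, myT_recS x hx.ne' n k]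
  have h1 : myF x n = ∑' k, (((2*(n:ℝ)+1)/x) * myT x (n+1) k + g k) :=
    tsum_congr hterm
  rw [h1, Summable.tsum_add ((myT_summable hx.le (n+1)).mul_left _) hgs, tsum_mul_left]
  unfold myF
  congr 1
  rw [Summable.tsum_eq_zero_add hgs]
  simp [hg]

lemma myT_zero_eq (x : ℝ) :
    (fun k : ℕ => x^(2*k) / Nat.factorial (2*k)) = myT x 0 := by
  funext k
  unfold myT
  have hf3 : ((Nat.factorial k):ℝ) ≠ 0 := by exact_mod_cast Nat.factorial_ne_zero _
  simp only [pow_zero, one_mul, Nat.zero_add, Nat.add_zero, Nat.mul_zero, Nat.zero_mul, zero_add, add_zero]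
  have h3 : ((Nat.factorial (2*k)):ℝ) ≠ 0 := by exact_mod_cast Nat.factorial_ne_zero _
  field_simp

lemma myT_one_eq (x : ℝ) :
    (fun k : ℕ => x^(2*k+1) / Nat.factorial (2*k+1)) = myT x 1 := by
  funext k
  unfold myT
  have hf3 : ((Nat.factorial k):ℝ) ≠ 0 := by exact_mod_cast Nat.factorial_ne_zero _
  rw [show (1:ℕ)+k = k+1 from by ring, show 2*1+2*k = (2*k+1)+1 from by ring]
  simp only [Nat.factorial_succ, pow_succ, pow_one]
  push_cast
  have h1 : (2*(k:ℝ)+1+1) ≠ 0 := by positivity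
  have h2 : (2*(k:ℝ)+1) ≠ 0 := by positivity
  have h3 : ((Nat.factorial (2*k+1)):ℝ) ≠ 0 := by exact_mod_cast Nat.factorial_ne_zero _
  field_simp
  ring

lemma exp_hasSum (x : ℝ) :
    HasSum (fun n : ℕ => x^n / Nat.factorial n) (Real.exp x) := by
  have hexp : Real.exp x = ∑' n : ℕ, x^n / Nat.factorial n := by
    rw [Real.exp_eq_exp_ℝ, NormedSpace.exp_eq_tsum_div]
  rw [hexp]
  exact (Real.summable_pow_div_factorial x).hasSum

lemma myF_add {x : ℝ} (hx : 0 ≤ x) : myF x 0 + myF x 1 = Real.exp x := by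
  have he : HasSum (fun k : ℕ => x^(2*k) / Nat.factorial (2*k)) (myF x 0) := by
    rw [myT_zero_eq]; exact (myT_summable hx 0).hasSum
  have ho : HasSum (fun k : ℕ => x^(2*k+1) / Nat.factorial (2*k+1)) (myF x 1) := by
    rw [myT_one_eq]; exact (myT_summable hx 1).hasSum
  exact (HasSum.even_add_odd (f := fun n : ℕ => x^n / Nat.factorial n) he ho).unique (exp_hasSum x)

lemma myF_sub {x : ℝ} (hx : 0 ≤ x) : myF x 0 - myF x 1 = Real.exp (-x) := by
  have he : HasSum (fun k : ℕ => x^(2*k) / Nat.factorial (2*k)) (myF x 0) := by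
    rw [myT_zero_eq]; exact (myT_summable hx 0).hasSum
  have ho : HasSum (fun k : ℕ => x^(2*k+1) / Nat.factorial (2*k+1)) (myF x 1) := by
    rw [myT_one_eq]; exact (myT_summable hx 1).hasSum
  have he' : HasSum (fun k : ℕ => (-x)^(2*k) / Nat.factorial (2*k)) (myF x 0) := by
    have h : (fun k : ℕ => (-x)^(2*k) / Nat.factorial (2*k))
        = (fun k : ℕ => x^(2*k) / Nat.factorial (2*k)) := by
      funext k; rw [Even.neg_pow (even_two_mul k)]
    rw [h]; exact he
  have ho' : HasSum (fun k : ℕ => (-x)^(2*k+1) / Nat.factorial (2*k+1)) (-(myF x 1)) := by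
    have h : (fun k : ℕ => (-x)^(2*k+1) / Nat.factorial (2*k+1))
        = (fun k : ℕ => -(x^(2*k+1) / Nat.factorial (2*k+1))) := by
      funext k; rw [Odd.neg_pow ⟨k, by ring⟩]; ring
    rw [h]; exact ho.neg
  have h := (HasSum.even_add_odd (f := fun n : ℕ => (-x)^n / Nat.factorial n) he' ho').unique (exp_hasSum (-x))
  linarith [h]

theorem stmt17 (s : ℕ) (hs : 0 < s) :
    CFConvTo (fun _ => 1)
      (fun n => if n = 0 then 0 else (4 * (n : ℝ) - 2) * s)
      ((Real.exp (1/(s : ℝ)) - 1) / (Real.exp (1/(s : ℝ)) + 1)) ∧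
    (Real.exp (1/(s : ℝ)) - 1) / (Real.exp (1/(s : ℝ)) + 1) = Real.tanh (1/(2*(s : ℝ))) := by
  have hs0 : (0:ℝ) < (s:ℝ) := by exact_mod_cast hs
  have hs1 : (1:ℝ) ≤ (s:ℝ) := by exact_mod_cast hs
  set x : ℝ := 1/(2*(s:ℝ)) with hxdef
  have hx : 0 < x := by positivity
  set pa : ℕ → ℝ := (fun _ => 1) with hpa
  set pb : ℕ → ℝ := (fun n => if n = 0 then 0 else (4 * (n : ℝ) - 2) * s) with hpbdef
  set A : ℕ → ℝ := CFnum pa pb with hA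
  set B : ℕ → ℝ := CFden pa pb with hB
  have hpb : ∀ n : ℕ, pb (n+1) = (2*(n:ℝ)+1)/x := by
    intro n
    rw [hpbdef]
    simp only
    rw [if_neg (Nat.succ_ne_zero n), hxdef]
    push_cast
    field_simp
    ring
  have hpb2 : ∀ n : ℕ, (2:ℝ) ≤ pb (n+1) := by
    intro n
    rw [hpbdef]
    simp only
    rw [if_neg (Nat.succ_ne_zero n)]
    push_cast
    nlinarith [Nat.cast_nonneg (α := ℝ) n]
  have hFrec : ∀ n : ℕ, myF x n = pb (n+1) * myF x (n+1) + myF x (n+2) := by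
    intro n
    rw [hpb n]
    exact myF_rec hx n
  have hArec : ∀ n : ℕ, A (n+2) = pb (n+1) * A (n+1) + A n := by
    intro n; rw [hA]; show CFnum pa pb (n+2) = _
    rw [CFnum]; simp [hpa]
  have hBrec : ∀ n : ℕ, B (n+2) = pb (n+1) * B (n+1) + B n := by
    intro n; rw [hB]; show CFden pa pb (n+2) = _
    rw [CFden]; simp [hpa]
  have hA0 : A 0 = 1 := rfl
  have hA1 : A 1 = 0 := by show pb 0 = 0; rw [hpbdef]; simp
  have hB0 : B 0 = 0 := rfl
  have hB1 : B 1 = 1 := rfl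
  have hBgrow : ∀ n : ℕ, (1 ≤ B (n+1) ∧ (n:ℝ) ≤ B (n+1)) ∧ (1 ≤ B (n+2) ∧ ((n:ℝ)+1) ≤ B (n+2)) := by
    intro n
    induction n with
    | zero =>
      have h2 : B 2 = pb 1 * B 1 + B 0 := hBrec 0
      have hp := hpb2 0
      refine ⟨⟨by rw [hB1], by rw [hB1]; norm_num⟩, ?_⟩
      rw [h2, hB1, hB0]
      push_cast
      constructor <;> nlinarith
    | succ n ih =>
      obtain ⟨⟨h11, h12⟩, ⟨h21, h22⟩⟩ := ih
      refine ⟨⟨h21, by push_cast; linarith⟩, ?_⟩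
      have h3 : B (n+1+2) = pb (n+2) * B (n+2) + B (n+1) := hBrec (n+1)
      have hp := hpb2 (n+1)
      constructor
      · rw [h3]; nlinarith
      · rw [h3]; push_cast; nlinarith
  have hB1le : ∀ n : ℕ, 1 ≤ B (n+1) := fun n => (hBgrow n).1.1
  have hBnle : ∀ n : ℕ, (n:ℝ) ≤ B (n+1) := fun n => (hBgrow n).1.2
  have hunfold : ∀ n : ℕ,
      myF x 0 = B (n+1) * myF x n + B n * myF x (n+1) ∧
      myF x 1 = A (n+1) * myF x n + A n * myF x (n+1) := by
    intro n
    induction n with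
    | zero => rw [hA0, hA1, hB0, hB1]; constructor <;> ring
    | succ n ih =>
      obtain ⟨ih1, ih2⟩ := ih
      constructor
      · rw [ih1, hFrec n, hBrec n]; ring
      · rw [ih2, hFrec n, hArec n]; ring
  have hdet : ∀ n : ℕ, A (n+1) * B n - A n * B (n+1) = (-1:ℝ)^(n+1) := by
    intro n
    induction n with
    | zero => rw [hA0, hA1, hB0, hB1]; ring
    | succ n ih =>
      rw [hArec n, hBrec n]
      calc (pb (n+1) * A (n+1) + A n) * B (n+1) - A (n+1) * (pb (n+1) * B (n+1) + B n)
          = -(A (n+1) * B n - A n * B (n+1)) := by ring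
        _ = (-1:ℝ)^(n+1+1) := by rw [ih]; ring
  set L : ℝ := myF x 1 / myF x 0 with hL
  have hF0 : 0 < myF x 0 := myF_pos hx 0
  have herr : ∀ n : ℕ, 1 ≤ n → |A (n+1) / B (n+1) - L| ≤ 1/(n:ℝ) := by
    intro n hn
    obtain ⟨h1, h2⟩ := hunfold n
    have hBn1pos : (0:ℝ) < B (n+1) := lt_of_lt_of_le one_pos (hB1le n)
    have hBn1 : (1:ℝ) ≤ B n := by
      match n, hn with
      | (m+1), _ => exact hB1le m
    have hFn1 : 0 < myF x (n+1) := myF_pos hx (n+1)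
    have hFn : 0 < myF x n := myF_pos hx n
    have hnpos : (0:ℝ) < (n:ℝ) := by exact_mod_cast hn
    have habs : |A (n+1) / B (n+1) - L| = myF x (n+1) / (B (n+1) * myF x 0) := by
      rw [hL, div_sub_div _ _ hBn1pos.ne' hF0.ne', abs_div,
        abs_of_pos (by positivity : (0:ℝ) < B (n+1) * myF x 0)]
      congr 1
      have hnum : A (n+1) * myF x 0 - B (n+1) * myF x 1 = (-1:ℝ)^(n+1) * myF x (n+1) := by
        calc A (n+1) * myF x 0 - B (n+1) * myF x 1
            = (A (n+1) * B n - A n * B (n+1)) * myF x (n+1) := by rw [h1, h2]; ring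
          _ = _ := by rw [hdet n]
      rw [hnum, abs_mul, abs_pow, abs_neg, abs_one, one_pow, one_mul, abs_of_pos hFn1]
    rw [habs]
    have hle : myF x (n+1) ≤ myF x 0 := by nlinarith
    calc myF x (n+1) / (B (n+1) * myF x 0) ≤ myF x 0 / (B (n+1) * myF x 0) := by
          apply div_le_div_of_nonneg_right hle (by positivity) |>.trans_eq rfl
      _ = 1 / B (n+1) := by rw [div_mul_eq_div_div_swap, div_self hF0.ne']
      _ ≤ 1 / (n:ℝ) := by
          apply one_div_le_one_div_of_le hnpos (hBnle n)
  have htend : Tendsto (fun n : ℕ => A (n+1) / B (n+1)) atTop (𝓝 L) := by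
    rw [tendsto_iff_dist_tendsto_zero]
    simp only [Real.dist_eq]
    exact squeeze_zero' (Eventually.of_forall fun n => abs_nonneg _)
      (eventually_atTop.mpr ⟨1, fun n hnn => herr n hnn⟩)
      tendsto_one_div_atTop_nhds_zero_nat
  have hexp2 : Real.exp (1/(s:ℝ)) = Real.exp x * Real.exp x := by
    rw [← Real.exp_add]
    congr 1
    rw [hxdef]
    field_simp
    ring
  have hFadd := myF_add hx.le
  have hFsub := myF_sub hx.le
  have hLval : L = (Real.exp (1/(s:ℝ)) - 1) / (Real.exp (1/(s:ℝ)) + 1) := by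
    rw [hL]
    have h1 : myF x 1 = (Real.exp x - Real.exp (-x))/2 := by linarith
    have h2 : myF x 0 = (Real.exp x + Real.exp (-x))/2 := by linarith
    rw [h1, h2, hexp2, Real.exp_neg]
    have he : (0:ℝ) < Real.exp x := Real.exp_pos x
    have hne1 : Real.exp x * Real.exp x + 1 ≠ 0 := by positivity
    have hne2 : Real.exp x + (Real.exp x)⁻¹ ≠ 0 := by positivity
    field_simp
  constructor
  · show Tendsto (fun n => A (n+1) / B (n+1)) atTop _
    rw [← hLval]
    exact htend
  · rw [Real.tanh_eq_sinh_div_cosh, Real.sinh_eq, Real.cosh_eq, Real.exp_neg, hexp2]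
    have he : (0:ℝ) < Real.exp x := Real.exp_pos x
    have hne1 : Real.exp x * Real.exp x + 1 ≠ 0 := by positivity
    have hne2 : Real.exp x + (Real.exp x)⁻¹ ≠ 0 := by positivity
    field_simp
end

section
/- Let f, g, h, k be positive integers satisfying 2gh = k(2f + h), and let n ≥ 1. Then the finite continued fraction [0; f, g, f+h, g+k, f+2h, g+2k, ..., f+(n-1)h, g+(n-1)k] equals (\sum_{i=1}^{n} \binom{2n-i}{i-1} (2g/(2f+h))^{2n-i} \prod_{j=i}^{2n-i}(f + j h/2)) / (\sum_{i=0}^{n} \binom{2n-i}{i} (2g/(2f+h))^{2n-1-i} \prod_{j=i}^{2n-1-i}(f + j h/2)). -/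
/-!
With `X = 2g/(2f+h)` the hypothesis says `k = X h`, and `g = X (f + h/2)`, so the partial
quotients are `f + t h/2` (`t = 0, 1, …`) with every second one multiplied by `X`. Since
`1/(X b + r) = X⁻¹/(b + X⁻¹ r)`, the continued fraction is the one with quotients in arithmetic
progression and all partial numerators `X⁻¹`, whose value is a ratio of continuants. The
continuant of `a, a + d, …, a + (m-1) d` with partial numerators `z` has the closed form
`∑ᵢ zⁱ C(m-i, i) ∏_{i ≤ j < m-i} (a + j d)`: it satisfies the continuant recurrence by Pascal's
rule and `(i+1) C(p+1, i+1) = (p+1) C(p, i)`. Multiplying numerator and denominator by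
`X^(2n-1)` gives the stated sums.
-/

/-- The value of the finite regular continued fraction `[0; c₁, ..., cₙ]`. -/
def cfVal : List ℚ → ℚ
  | [] => 0
  | x :: t => 1 / (x + cfVal t)

open Finset

section Continuant

variable {R : Type*} [CommRing R]

def apContinuantTerm (z a d : R) (m i : ℕ) : R :=
  z ^ i * (m - i).choose i * ∏ j ∈ range (m - 2 * i), (a + (i + j) * d)

def apContinuant (z a d : R) (m : ℕ) : R :=
  ∑ i ∈ range (m + 1), apContinuantTerm z a d m i

theorem apContinuantTerm_of_eq (z a d : R) {m i r : ℕ} (h : m = 2 * i + r) :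
    apContinuantTerm z a d m i =
      z ^ i * (i + r).choose i * ∏ j ∈ range r, (a + (i + j) * d) := by
  subst h
  rw [apContinuantTerm, show 2 * i + r - i = i + r by omega, show 2 * i + r - 2 * i = r by omega]

theorem apContinuantTerm_eq_zero (z a d : R) {m i : ℕ} (h : m < 2 * i) :
    apContinuantTerm z a d m i = 0 := by
  rw [apContinuantTerm, Nat.choose_eq_zero_of_lt (by omega), Nat.cast_zero, mul_zero, zero_mul]

theorem apContinuant_eq_sum_range (z a d : R) {m N : ℕ} (h : m < 2 * N) :
    apContinuant z a d m = ∑ i ∈ range N, apContinuantTerm z a d m i := by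
  have hzero : ∀ i ≥ m / 2 + 1, apContinuantTerm z a d m i = 0 := fun i hi =>
    apContinuantTerm_eq_zero z a d (by omega)
  rw [apContinuant, eventually_constant_sum hzero (n := m + 1) (by omega),
    eventually_constant_sum hzero (n := N) (by omega)]

@[simp]
theorem apContinuant_zero (z a d : R) : apContinuant z a d 0 = 1 := by
  simp [apContinuant, apContinuantTerm]

@[simp]
theorem apContinuant_one (z a d : R) : apContinuant z a d 1 = a := by
  simp [apContinuant, apContinuantTerm, sum_range_succ]

theorem cast_choose_succ_succ_mul (a d : R) (p i : ℕ) :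
    ((p + 1).choose (i + 1) : R) * (a + (i + 1) * d) =
      (p.choose (i + 1) : R) * a + p.choose i * (a + (p + 1) * d) := by
  have hpascal := congrArg (Nat.cast : ℕ → R) (Nat.choose_succ_succ' p i)
  have habsorb := congrArg (Nat.cast : ℕ → R) (Nat.add_one_mul_choose_eq p i)
  push_cast at hpascal habsorb
  linear_combination a * hpascal - d * habsorb

theorem apContinuantTerm_zero_add_two (z a d : R) (m : ℕ) :
    apContinuantTerm z a d (m + 2) 0 = a * apContinuantTerm z (a + d) d (m + 1) 0 := by
  rw [apContinuantTerm_of_eq z a d (m := m + 2) (i := 0) (r := m + 2) (by omega),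
    apContinuantTerm_of_eq z (a + d) d (m := m + 1) (i := 0) (r := m + 1) (by omega),
    prod_range_succ']
  simp only [Nat.choose_zero_right, Nat.cast_one, Nat.cast_zero, pow_zero, one_mul, zero_add,
    zero_mul, add_zero]
  rw [mul_comm]
  exact congrArg (a * ·) (prod_congr rfl fun j _ => by push_cast; ring)

theorem apContinuantTerm_succ_add_two (z a d : R) (m i : ℕ) :
    apContinuantTerm z a d (m + 2) (i + 1) =
      a * apContinuantTerm z (a + d) d (m + 1) (i + 1) +
        z * apContinuantTerm z (a + 2 * d) d m i := by
  rcases lt_trichotomy (2 * i) m with hlt | rfl | hgt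
  · obtain ⟨r, rfl⟩ : ∃ r, m = 2 * i + r + 1 := ⟨m - 2 * i - 1, by omega⟩
    rw [apContinuantTerm_of_eq z a d (r := r + 1) (by omega),
      apContinuantTerm_of_eq z (a + d) d (r := r) (by omega),
      apContinuantTerm_of_eq z (a + 2 * d) d (r := r + 1) (by omega), prod_range_succ',
      prod_range_succ]
    set P := ∏ j ∈ range r, (a + (i + 2 + j) * d)
    have hP₀ : ∏ j ∈ range r, (a + ((i + 1 : ℕ) + (j + 1 : ℕ)) * d) = P :=
      prod_congr rfl fun j _ => by push_cast; ring
    have hP₁ : ∏ j ∈ range r, (a + d + ((i + 1 : ℕ) + j) * d) = P :=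
      prod_congr rfl fun j _ => by push_cast; ring
    have hP₂ : ∏ j ∈ range r, (a + 2 * d + (i + j) * d) = P :=
      prod_congr rfl fun j _ => by ring
    rw [hP₀, hP₁, hP₂, show i + 1 + (r + 1) = i + r + 1 + 1 by omega,
      show i + 1 + r = i + r + 1 by omega, show i + (r + 1) = i + r + 1 by omega]
    have hchoose := cast_choose_succ_succ_mul a d (i + r + 1) i
    push_cast at hchoose ⊢
    linear_combination z ^ (i + 1) * P * hchoose
  · rw [apContinuantTerm_of_eq z a d (r := 0) (by omega),
      apContinuantTerm_eq_zero z (a + d) d (by omega),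
      apContinuantTerm_of_eq z (a + 2 * d) d (r := 0) (by omega)]
    simp [pow_succ, mul_comm]
  · rw [apContinuantTerm_eq_zero z a d (by omega),
      apContinuantTerm_eq_zero z (a + d) d (by omega),
      apContinuantTerm_eq_zero z (a + 2 * d) d hgt]
    ring

theorem apContinuant_add_two (z a d : R) (m : ℕ) :
    apContinuant z a d (m + 2) =
      a * apContinuant z (a + d) d (m + 1) + z * apContinuant z (a + 2 * d) d m := by
  rw [apContinuant, apContinuant_eq_sum_range z (a + d) d (N := m + 3) (by omega),
    apContinuant_eq_sum_range z (a + 2 * d) d (N := m + 2) (by omega), sum_range_succ',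
    sum_range_succ' _ (m + 2), mul_add, mul_sum, mul_sum, apContinuantTerm_zero_add_two]
  simp only [apContinuantTerm_succ_add_two, sum_add_distrib]
  ring

end Continuant

theorem apContinuant_pos {R : Type*} [CommRing R] [LinearOrder R] [IsStrictOrderedRing R]
    {z a d : R} (hz : 0 ≤ z) (ha : 0 < a) (hd : 0 ≤ d) (m : ℕ) :
    0 < apContinuant z a d m := by
  have hfactor : ∀ i j : ℕ, 0 < a + (i + j) * d := fun i j => by positivity
  refine sum_pos' (fun i _ => ?_) ⟨0, by simp, ?_⟩
  · exact mul_nonneg (by positivity) (prod_nonneg fun j _ => (hfactor i j).le)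
  · simpa [apContinuantTerm] using prod_pos fun j _ => hfactor 0 j

theorem one_div_add_one_div_mul_add_div {K : Type*} [Field K] {a b X P Q : K} (hX : X ≠ 0)
    (hQ : Q ≠ 0) (hb : b * Q + X⁻¹ * P ≠ 0) :
    1 / (a + 1 / (X * b + P / Q)) =
      (b * Q + X⁻¹ * P) / (a * (b * Q + X⁻¹ * P) + X⁻¹ * Q) := by
  have hXb : X * b * Q + P ≠ 0 := by
    rw [show X * b * Q + P = X * (b * Q + X⁻¹ * P) by field_simp]
    exact mul_ne_zero hX hb
  have hden : a + 1 / (X * b + P / Q) =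
      (a * (b * Q + X⁻¹ * P) + X⁻¹ * Q) / (b * Q + X⁻¹ * P) := by
    field_simp
  rw [hden, one_div_div]

theorem cfVal_flatMap_eq_div {a d X : ℚ} (ha : 0 < a) (hd : 0 ≤ d) (hX : 0 < X) {n : ℕ}
    (hn : 1 ≤ n) :
    cfVal ((List.range n).flatMap fun i : ℕ => [a + i * (2 * d), X * (a + d + i * (2 * d))]) =
      apContinuant X⁻¹ (a + d) d (2 * n - 1) / apContinuant X⁻¹ a d (2 * n) := by
  have hK : ∀ b m, 0 < b → 0 < apContinuant X⁻¹ b d m := fun b m hb =>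
    apContinuant_pos (inv_nonneg.mpr hX.le) hb hd m
  induction n, hn using Nat.le_induction generalizing a with
  | base =>
    have := one_div_add_one_div_mul_add_div (a := a) (b := a + d) (P := 0) hX.ne' one_ne_zero
      (by simpa using (hK (a + d) 1 (by positivity)).ne')
    simp only [mul_one, mul_zero, add_zero, zero_div] at this
    simpa [cfVal, apContinuant_add_two] using this
  | succ n hn ih =>
    have hshift : (List.range (n + 1)).flatMap
          (fun i : ℕ => [a + i * (2 * d), X * (a + d + i * (2 * d))]) =
        a :: X * (a + d) :: (List.range n).flatMap
          (fun i : ℕ => [a + 2 * d + i * (2 * d), X * (a + 2 * d + d + i * (2 * d))]) := by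
      rw [List.range_succ_eq_map, List.flatMap_cons, List.flatMap_map]
      simp only [Nat.cast_zero, zero_mul, add_zero, List.cons_append, List.nil_append,
        Nat.cast_succ]
      congr 2
      refine List.flatMap_congr fun i _ => ?_
      simp only [List.cons.injEq, and_true]
      constructor <;> ring
    have hodd : apContinuant X⁻¹ (a + d) d (2 * (n + 1) - 1) =
        (a + d) * apContinuant X⁻¹ (a + 2 * d) d (2 * n) +
          X⁻¹ * apContinuant X⁻¹ (a + 2 * d + d) d (2 * n - 1) := by
      rw [show 2 * (n + 1) - 1 = 2 * n - 1 + 2 by omega, apContinuant_add_two,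
        show 2 * n - 1 + 1 = 2 * n by omega, show a + d + d = a + 2 * d by ring,
        show a + d + 2 * d = a + 2 * d + d by ring]
    have heven : apContinuant X⁻¹ a d (2 * (n + 1)) =
        a * apContinuant X⁻¹ (a + d) d (2 * (n + 1) - 1) +
          X⁻¹ * apContinuant X⁻¹ (a + 2 * d) d (2 * n) := by
      rw [show 2 * (n + 1) - 1 = 2 * n + 1 by omega, show 2 * (n + 1) = 2 * n + 2 by omega,
        apContinuant_add_two]
    have hP := hK (a + 2 * d + d) (2 * n - 1) (by positivity)
    have hQ := hK (a + 2 * d) (2 * n) (by positivity)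
    rw [hshift, cfVal, cfVal, ih (by positivity),
      one_div_add_one_div_mul_add_div hX.ne' hQ.ne' (by positivity), heven, hodd]

@[to_additive]
theorem prod_Icc_eq_prod_range {M : Type*} [CommMonoid M] (g : ℕ → M) (i j : ℕ) :
    ∏ k ∈ Icc i j, g k = ∏ k ∈ range (j + 1 - i), g (i + k) := by
  rw [← Ico_add_one_right_eq_Icc, prod_Ico_eq_prod_range]

section Closed

variable {K : Type*} [Field K] {X : K}

theorem pow_mul_inv_pow_mul (hX : X ≠ 0) {p i : ℕ} (h : i ≤ p) (c : K) :
    X ^ p * (X⁻¹ ^ i * c) = X ^ (p - i) * c := by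
  rw [pow_sub₀ X hX h, inv_pow, mul_assoc]

theorem pow_mul_apContinuant_even (hX : X ≠ 0) (a d : K) {n : ℕ} (hn : 1 ≤ n) :
    X ^ (2 * n - 1) * apContinuant X⁻¹ a d (2 * n) =
      ∑ i ∈ range (n + 1), ((2 * n - i).choose i : K) * X ^ (2 * n - 1 - i) *
        ∏ j ∈ Icc i (2 * n - 1 - i), (a + j * d) := by
  rw [apContinuant_eq_sum_range X⁻¹ a d (N := n + 1) (by omega), mul_sum]
  refine sum_congr rfl fun i hi => ?_
  have hi : i ≤ n := Nat.lt_succ_iff.mp (mem_range.mp hi)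
  rw [apContinuantTerm, mul_assoc, mul_assoc, pow_mul_inv_pow_mul hX (by omega),
    prod_Icc_eq_prod_range, show 2 * n - 1 - i + 1 - i = 2 * n - 2 * i by omega]
  push_cast
  ring

theorem pow_mul_apContinuant_odd (hX : X ≠ 0) (a d : K) {n : ℕ} (hn : 1 ≤ n) :
    X ^ (2 * n - 1) * apContinuant X⁻¹ (a + d) d (2 * n - 1) =
      ∑ i ∈ Icc 1 n, ((2 * n - i).choose (i - 1) : K) * X ^ (2 * n - i) *
        ∏ j ∈ Icc i (2 * n - i), (a + j * d) := by
  rw [apContinuant_eq_sum_range X⁻¹ (a + d) d (N := n) (by omega), mul_sum, sum_Icc_eq_sum_range,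
    Nat.add_sub_cancel]
  refine sum_congr rfl fun i hi => ?_
  have hi : i < n := mem_range.mp hi
  rw [apContinuantTerm, mul_assoc, mul_assoc, pow_mul_inv_pow_mul hX (by omega),
    prod_Icc_eq_prod_range, show 2 * n - (1 + i) + 1 - (1 + i) = 2 * n - 1 - 2 * i by omega,
    show 2 * n - (1 + i) = 2 * n - 1 - i by omega, show 1 + i - 1 = i by omega]
  have hprod : ∏ j ∈ range (2 * n - 1 - 2 * i), (a + d + (i + j) * d) =
      ∏ j ∈ range (2 * n - 1 - 2 * i), (a + (1 + i + j : ℕ) * d) :=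
    prod_congr rfl fun j _ => by push_cast; ring
  rw [hprod]
  ring

end Closed

theorem stmt18_general (f g h k : ℕ) (hf : 0 < f) (hg : 0 < g)
    (hcond : 2*g*h = k*(2*f + h)) (n : ℕ) (hn : 1 ≤ n) :
    cfVal ((List.range n).flatMap
        (fun i => [(f : ℚ) + (i : ℚ) * h, (g : ℚ) + (i : ℚ) * k])) =
      (∑ i ∈ Finset.Icc 1 n, ((2*n-i).choose (i-1) : ℚ) *
          (2*(g : ℚ)/(2*(f : ℚ) + h))^(2*n-i) *
          ∏ j ∈ Finset.Icc i (2*n-i), ((f : ℚ) + (j : ℚ) * h / 2)) /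
      (∑ i ∈ Finset.range (n+1), ((2*n-i).choose i : ℚ) *
          (2*(g : ℚ)/(2*(f : ℚ) + h))^(2*n-1-i) *
          ∏ j ∈ Finset.Icc i (2*n-1-i), ((f : ℚ) + (j : ℚ) * h / 2)) := by
  set X : ℚ := 2 * g / (2 * f + h) with hXdef
  have hX : 0 < X := by positivity
  have hg' : X * (f + h / 2) = g := by
    rw [hXdef]; field_simp
  have hk' : X * h = k := by
    rw [hXdef, div_mul_eq_mul_div, div_eq_iff (by positivity)]; exact_mod_cast hcond
  have hlist : ∀ i : ℕ, [(f : ℚ) + (i : ℚ) * h, (g : ℚ) + (i : ℚ) * k] =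
      [(f : ℚ) + i * (2 * (h / 2)), X * (f + h / 2 + i * (2 * (h / 2)))] := fun i => by
    rw [← hg', ← hk']
    simp only [List.cons.injEq, and_true]
    constructor <;> ring
  -- `i` is elaborated in `ℚ`: the list in the statement is `List.range n` cast to `List ℚ`
  -- through the list monad.
  simp only [bind_pure_comp, List.map_eq_map, List.flatMap_map, hlist]
  rw [cfVal_flatMap_eq_div (by positivity) (by positivity) hX hn,
    ← mul_div_mul_left _ _ (pow_ne_zero (2 * n - 1) hX.ne'),
    pow_mul_apContinuant_odd hX.ne' _ _ hn, pow_mul_apContinuant_even hX.ne' _ _ hn]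
  simp only [mul_div_assoc]

theorem stmt18 (f g h k : ℕ) (hf : 0 < f) (hg : 0 < g) (hh : 0 < h) (hk : 0 < k)
    (hcond : 2*g*h = k*(2*f + h)) (n : ℕ) (hn : 1 ≤ n) :
    cfVal ((List.range n).flatMap
        (fun i => [(f : ℚ) + (i : ℚ) * h, (g : ℚ) + (i : ℚ) * k])) =
      (∑ i ∈ Finset.Icc 1 n, ((2*n-i).choose (i-1) : ℚ) *
          (2*(g : ℚ)/(2*(f : ℚ) + h))^(2*n-i) *
          ∏ j ∈ Finset.Icc i (2*n-i), ((f : ℚ) + (j : ℚ) * h / 2)) /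
      (∑ i ∈ Finset.range (n+1), ((2*n-i).choose i : ℚ) *
          (2*(g : ℚ)/(2*(f : ℚ) + h))^(2*n-1-i) *
          ∏ j ∈ Finset.Icc i (2*n-1-i), ((f : ℚ) + (j : ℚ) * h / 2)) :=
  stmt18_general f g h k hf hg hcond n hn
end

section
/- Let a_1, ..., a_k be positive integers with convergents P_i/Q_i of [0; a_1, ..., a_k], let c and m > 1 be integers and d a positive rational with dm ∈ ℕ and c + dm > 0, and set C = Q_{k-1} + P_k + c·Q_k. Then the infinite continued fraction [0; a_1, ..., a_k, c + dm, a_1, ..., a_k, c + dm^2, a_1, ..., a_k, c + dm^3, ...] equals P_k/Q_k + (1/Q_k)·L, where L is the value of the continued fraction (-1)^k/(C + dQ_k m) + (-1)^k/(C + dQ_k m^2) + (-1)^k/(C + dQ_k m^3) + ... (in the sense of continued fraction composition: the tail after each block a_1,...,a_k is transformed by x ↦ (P_k x + P_{k-1})/(Q_k x + Q_{k-1})). -/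
open Filter Topology

set_option maxHeartbeats 4000000 in
theorem stmt19 (k : ℕ) (hk : 1 ≤ k) (a : ℕ → ℕ)
    (ha : ∀ i, 1 ≤ i → i ≤ k → 0 < a i)
    (P Q : ℕ → ℝ)
    (hP0 : P 0 = 0) (hQ0 : Q 0 = 1) (hP1 : P 1 = 1) (hQ1 : Q 1 = (a 1 : ℝ))
    (hPrec : ∀ i, 2 ≤ i → i ≤ k → P i = (a i : ℝ) * P (i-1) + P (i-2))
    (hQrec : ∀ i, 2 ≤ i → i ≤ k → Q i = (a i : ℝ) * Q (i-1) + Q (i-2))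
    (c m : ℤ) (hm : 1 < m) (d : ℚ) (hd : 0 < d)
    (hdm : ∃ N : ℕ, d * m = N) (hcdm : 0 < (c : ℚ) + d * m)
    (C : ℝ) (hC : C = Q (k-1) + P k + (c : ℝ) * Q k)
    (t : ℕ → ℝ) (ht0 : t 0 = 0)
    (htA : ∀ n r : ℕ, r < k → t (n*(k+1) + r + 1) = (a (r+1) : ℝ))
    (htB : ∀ n : ℕ, t (n*(k+1) + k + 1) = (c : ℝ) + (d : ℝ) * (m : ℝ)^(n+1))
    (x L : ℝ)
    (hx : CFConvTo (fun _ => 1) t x)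
    (hL : CFConvTo (fun _ => (-1 : ℝ)^k)
      (fun n => if n = 0 then 0 else C + (d : ℝ) * Q k * (m : ℝ)^n) L) :
    x = P k / Q k + (1/Q k) * L := by
  obtain ⟨k', rfl⟩ : ∃ k', k = k' + 1 := ⟨k - 1, by omega⟩
  simp only [Nat.add_sub_cancel] at hC
  -- abbreviations
  set σ : ℝ := (-1 : ℝ)^(k'+1) with hσdef
  have hσ2 : σ * σ = 1 := by rw [hσdef, ← pow_add]; exact Even.neg_one_pow ⟨(k'+1), rfl⟩
  have hσpm : σ = 1 ∨ σ = -1 := by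
    rcases Nat.even_or_odd (k'+1) with h | h
    · exact Or.inl h.neg_one_pow
    · exact Or.inr h.neg_one_pow
  set N : ℕ → ℝ := CFnum (fun _ => 1) t with hNdef
  set D : ℕ → ℝ := CFden (fun _ => 1) t with hDdef
  set N' : ℕ → ℝ := CFnum (fun _ => σ)
      (fun n => if n = 0 then 0 else C + (d : ℝ) * Q (k'+1) * (m : ℝ)^n) with hN'def
  set D' : ℕ → ℝ := CFden (fun _ => σ)
      (fun n => if n = 0 then 0 else C + (d : ℝ) * Q (k'+1) * (m : ℝ)^n) with hD'def
  have hN0 : N 0 = 1 := rfl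
  have hN1 : N 1 = 0 := by rw [hNdef]; show t 0 = 0; exact ht0
  have hD0v : D 0 = 0 := rfl
  have hD1 : D 1 = 1 := rfl
  have hN'0 : N' 0 = 1 := rfl
  have hN'1 : N' 1 = 0 := by rw [hN'def]; simp [CFnum]
  have hD'0 : D' 0 = 0 := rfl
  have hD'1 : D' 1 = 1 := rfl
  have hNrec : ∀ j, N (j+2) = t (j+1) * N (j+1) + N j := by
    intro j; rw [hNdef]; show _ = t (j+1) * _ + _; simp [CFnum]
  have hDrec : ∀ j, D (j+2) = t (j+1) * D (j+1) + D j := by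
    intro j; rw [hDdef]; show _ = t (j+1) * _ + _; simp [CFden]
  have hN'rec : ∀ j, N' (j+2) = (C + (d:ℝ) * Q (k'+1) * (m:ℝ)^(j+1)) * N' (j+1) + σ * N' j := by
    intro j; rw [hN'def]
    show (if j + 1 = 0 then (0:ℝ) else C + (d:ℝ) * Q (k'+1) * (m:ℝ)^(j+1)) * _ + σ * _
        = _
    simp [CFnum]
  have hD'rec : ∀ j, D' (j+2) = (C + (d:ℝ) * Q (k'+1) * (m:ℝ)^(j+1)) * D' (j+1) + σ * D' j := by
    intro j; rw [hD'def]
    show (if j + 1 = 0 then (0:ℝ) else C + (d:ℝ) * Q (k'+1) * (m:ℝ)^(j+1)) * _ + σ * _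
        = _
    simp [CFden]
  -- positivity of Q, P
  have hQpos : ∀ i, i ≤ (k'+1) → (1:ℝ) ≤ Q i := by
    intro i
    induction i using Nat.twoStepInduction with
    | zero => intro _; rw [hQ0]
    | one => intro _; rw [hQ1]; exact_mod_cast ha 1 le_rfl hk
    | more i ih1 ih2 =>
      intro hik
      rw [hQrec (i+2) (by omega) hik]
      have h1 : (1:ℝ) ≤ (a (i+2) : ℝ) := by exact_mod_cast ha (i+2) (by omega) hik
      have h2 : (1:ℝ) ≤ Q (i+2-1) := by
        have : i + 2 - 1 = i + 1 := by omega
        rw [this]; exact ih2 (by omega)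
      have h3 : (0:ℝ) ≤ Q (i+2-2) := by
        have : i + 2 - 2 = i := by omega
        rw [this]; linarith [ih1 (by omega)]
      nlinarith
  have hPpos : ∀ i, i ≤ (k'+1) → (0:ℝ) ≤ P i ∧ (1 ≤ i → (1:ℝ) ≤ P i) := by
    intro i
    induction i using Nat.twoStepInduction with
    | zero => intro _; rw [hP0]; exact ⟨le_rfl, by omega⟩
    | one => intro _; rw [hP1]; exact ⟨zero_le_one, fun _ => le_rfl⟩
    | more i ih1 ih2 =>
      intro hik
      rw [hPrec (i+2) (by omega) hik]
      have h1 : (1:ℝ) ≤ (a (i+2) : ℝ) := by exact_mod_cast ha (i+2) (by omega) hik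
      have h2 : (1:ℝ) ≤ P (i+2-1) := by
        have : i + 2 - 1 = i + 1 := by omega
        rw [this]; exact (ih2 (by omega)).2 (by omega)
      have h3 : (0:ℝ) ≤ P (i+2-2) := by
        have : i + 2 - 2 = i := by omega
        rw [this]; exact (ih1 (by omega)).1
      constructor
      · nlinarith
      · intro _; nlinarith
  have hQk1 : (1:ℝ) ≤ Q (k'+1) := hQpos (k'+1) le_rfl
  have hQk'1 : (1:ℝ) ≤ Q k' := hQpos k' (by omega)
  have hPk1 : (1:ℝ) ≤ P (k'+1) := (hPpos (k'+1) le_rfl).2 hk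
  have hQkne : Q (k'+1) ≠ 0 := by linarith
  -- determinant identity
  have hdet : ∀ i, 1 ≤ i → i ≤ (k'+1) → P (i-1) * Q i - P i * Q (i-1) = (-1:ℝ)^i := by
    intro i h1 h2
    induction i with
    | zero => omega
    | succ i ih =>
      rcases Nat.eq_or_lt_of_le h1 with h | h
      · simp only [← h]
        norm_num [hP0, hP1, hQ0, hQ1]
      · have hi1 : 1 ≤ i := by omega
        have hik : i ≤ (k'+1) := by omega
        have ih' := ih hi1 hik
        have e1 : i + 1 - 1 = i := by omega
        rw [e1, hPrec (i+1) (by omega) h2, hQrec (i+1) (by omega) h2]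
        have e2 : i + 1 - 2 = i - 1 := by omega
        rw [e2, e1]
        rw [pow_succ]
        linear_combination (-1 : ℝ) * ih'
  have hdetk : P k' * Q (k'+1) - P (k'+1) * Q k' = σ := by
    have := hdet (k'+1) hk le_rfl
    have e1 : (k'+1) - 1 = k' := by omega
    rw [e1] at this
    rw [hσdef]; exact this
  -- block lemma
  have hblock : ∀ (g : ℕ → ℝ), (∀ j, g (j+2) = t (j+1) * g (j+1) + g j) →
      ∀ r, r ≤ (k'+1) → ∀ n, g (n*((k'+1)+1) + r + 1) = Q r * g (n*((k'+1)+1) + 1) + P r * g (n*((k'+1)+1)) := by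
    intro g hg r
    induction r using Nat.twoStepInduction with
    | zero => intro _ n; simp [hQ0, hP0]
    | one =>
      intro _ n
      have h := hg (n*((k'+1)+1))
      have ht := htA n 0 (by omega)
      simp only [Nat.add_zero] at ht ⊢
      rw [h, ht, hQ1, hP1]; ring
    | more r ih1 ih2 =>
      intro hrk n
      have e1 : n*((k'+1)+1) + (r+2) + 1 = (n*((k'+1)+1) + r + 1) + 2 := by omega
      have e2 : n*((k'+1)+1) + r + 1 + 1 = n*((k'+1)+1) + (r+1) + 1 := by omega
      rw [e1, hg (n*((k'+1)+1) + r + 1), e2]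
      have ht := htA n (r+1) (by omega)
      rw [ht]
      rw [ih1 (by omega) n, ih2 (by omega) n]
      rw [hPrec (r+2) (by omega) hrk, hQrec (r+2) (by omega) hrk]
      have e3 : r + 2 - 1 = r + 1 := by omega
      have e4 : r + 2 - 2 = r := by omega
      rw [e3, e4]
      ring
  have hblockN := hblock N hNrec
  have hblockD := hblock D hDrec
  -- the invariant
  have hf : ∀ n : ℕ, C + (d:ℝ) * Q (k'+1) * (m:ℝ)^(n+1)
      = Q (k'+1) * ((c:ℝ) + (d:ℝ) * (m:ℝ)^(n+1)) + Q k' + P (k'+1) := by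
    intro n; rw [hC]; ring
  have Inv : ∀ n : ℕ,
      N (n*((k'+1)+1)+(k'+1)+1) = N' (n+1) + P (k'+1) * D' (n+1) ∧
      D (n*((k'+1)+1)+(k'+1)+1) = Q (k'+1) * D' (n+1) ∧
      Q (k'+1) * N (n*((k'+1)+1)+(k'+1)) = Q k' * (N' (n+1) + P (k'+1) * D' (n+1)) + σ * (N' n + P (k'+1) * D' n) ∧
      D (n*((k'+1)+1)+(k'+1)) = Q k' * D' (n+1) + σ * D' n := by
    intro n
    induction n with
    | zero =>
      have b1 := hblockN (k'+1) le_rfl 0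
      have b2 := hblockD (k'+1) le_rfl 0
      have b3 := hblockN k' (by omega) 0
      have b4 := hblockD k' (by omega) 0
      have e1 : 0*((k'+1)+1) + (k'+1) + 1 = (k'+1) + 1 := by omega
      have e2 : 0*((k'+1)+1) + k' + 1 = (k'+1) := by omega
      have e3 : 0*((k'+1)+1) + 1 = 1 := by omega
      have e4 : 0*((k'+1)+1) = 0 := by omega
      rw [e1, e3, e4] at b1 b2
      rw [e2, e3, e4] at b3 b4
      have e5 : 0*((k'+1)+1) + (k'+1) = (k'+1) := by omega
      rw [e1, e5]
      rw [b1, b2, b3, b4, hN0, hN1, hD0v, hD1, hN'1, hD'1, hN'0, hD'0]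
      refine ⟨by ring, by ring, ?_, by ring⟩
      linear_combination hdetk
    | succ n ih =>
      obtain ⟨I1, I2, I3, I4⟩ := ih
      -- the e-step
      have eA : (n+1)*((k'+1)+1) = n*((k'+1)+1) + (k'+1) + 1 := by ring
      have eA2 : (n+1)*((k'+1)+1) + 1 = (n*((k'+1)+1) + (k'+1)) + 2 := by omega
      have hNe : N ((n+1)*((k'+1)+1) + 1)
          = ((c:ℝ) + (d:ℝ) * (m:ℝ)^(n+1)) * N (n*((k'+1)+1)+(k'+1)+1) + N (n*((k'+1)+1)+(k'+1)) := by
        rw [eA2, hNrec (n*((k'+1)+1)+(k'+1)), htB n]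
      have hDe : D ((n+1)*((k'+1)+1) + 1)
          = ((c:ℝ) + (d:ℝ) * (m:ℝ)^(n+1)) * D (n*((k'+1)+1)+(k'+1)+1) + D (n*((k'+1)+1)+(k'+1)) := by
        rw [eA2, hDrec (n*((k'+1)+1)+(k'+1)), htB n]
      have b1 := hblockN (k'+1) le_rfl (n+1)
      have b2 := hblockD (k'+1) le_rfl (n+1)
      have b3 := hblockN k' (by omega) (n+1)
      have b4 := hblockD k' (by omega) (n+1)
      have ek : (n+1)*((k'+1)+1) + k' + 1 = (n+1)*((k'+1)+1) + (k'+1) := by omega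
      rw [ek] at b3 b4
      rw [eA] at b1 b2 b3 b4
      have eB : n*((k'+1)+1) + (k'+1) + 1 + (k'+1) + 1 = (n+1)*((k'+1)+1)+(k'+1)+1 := by ring
      have eB' : n*((k'+1)+1) + (k'+1) + 1 + (k'+1) = (n+1)*((k'+1)+1)+(k'+1) := by ring
      rw [eB] at b1 b2
      rw [eB'] at b3 b4
      rw [eA] at hNe hDe
      set e : ℝ := (c:ℝ) + (d:ℝ) * (m:ℝ)^(n+1) with hedef
      have hN2 := hN'rec n
      have hD2 := hD'rec n
      have hfn := hf n
      refine ⟨?_, ?_, ?_, ?_⟩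
      · rw [b1, hNe, I1, hN2, hD2]
        linear_combination I3 - (N' (n+1) + P (k'+1) * D' (n+1)) * hfn
      · rw [b2, hDe, I2, I4, hD2]
        linear_combination (- Q (k'+1) * D' (n+1)) * hfn
      · rw [b3, hNe, I1, hN2, hD2]
        linear_combination Q k' * I3 - Q k' * (N' (n+1) + P (k'+1) * D' (n+1)) * hfn
          + (N' (n+1) + P (k'+1) * D' (n+1)) * hdetk
      · rw [b4, hDe, I2, I4, hD2]
        linear_combination (- Q k' * D' (n+1)) * hfn + D' (n+1) * hdetk
  -- positivity of D'
  have hm2 : (2:ℝ) ≤ (m:ℝ) := by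
    have h2' : (2:ℤ) ≤ m := by omega
    exact_mod_cast h2'
  have hd' : (0:ℝ) < (d:ℝ) := by exact_mod_cast hd
  have hcdm' : (0:ℝ) < (c:ℝ) + (d:ℝ) * (m:ℝ) := by exact_mod_cast hcdm
  have hfgt : ∀ n : ℕ, (2:ℝ) < C + (d:ℝ) * Q (k'+1) * (m:ℝ)^(n+1) := by
    intro n
    rw [hf n]
    have hmp : (m:ℝ) ≤ (m:ℝ)^(n+1) := by
      calc (m:ℝ) = (m:ℝ)^1 := (pow_one _).symm
      _ ≤ (m:ℝ)^(n+1) := pow_le_pow_right₀ (by linarith) (by omega)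
    have h1 : (0:ℝ) < (c:ℝ) + (d:ℝ) * (m:ℝ)^(n+1) := by nlinarith
    have h2 : (0:ℝ) < Q (k'+1) * ((c:ℝ) + (d:ℝ) * (m:ℝ)^(n+1)) := mul_pos (by linarith) h1
    linarith
  have hD'pos : ∀ n, 0 ≤ D' n ∧ D' n + 1 ≤ D' (n+1) := by
    intro n
    induction n with
    | zero => rw [hD'0, hD'1]; norm_num
    | succ n ih =>
      obtain ⟨h0, h1⟩ := ih
      have h2 := hD'rec n
      have h3 := hfgt n
      have hσD : σ * D' n ≥ -D' n := by
        rcases hσpm with h | h <;> rw [h] <;> nlinarith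
      constructor
      · linarith
      · rw [h2]; nlinarith
  have hD'ge : ∀ n, (1:ℝ) ≤ D' (n+1) := by
    intro n
    induction n with
    | zero => rw [hD'1]
    | succ n ih => linarith [(hD'pos (n+1)).2]
  -- termwise identity of the two convergent sequences
  have key : ∀ n : ℕ, N (n*((k'+1)+1)+(k'+1)+1) / D (n*((k'+1)+1)+(k'+1)+1)
      = P (k'+1) / Q (k'+1) + (1/Q (k'+1)) * (N' (n+1) / D' (n+1)) := by
    intro n
    obtain ⟨I1, I2, _, _⟩ := Inv n
    rw [I1, I2]
    have hD'ne : D' (n+1) ≠ 0 := by linarith [hD'ge n]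
    field_simp
    ring
  -- limits
  have hmono : Tendsto (fun n : ℕ => n*((k'+1)+1)+(k'+1)) atTop atTop := by
    apply tendsto_atTop_mono (fun n => ?_) tendsto_id
    calc (n : ℕ) = n * 1 := (Nat.mul_one n).symm
    _ ≤ n * ((k'+1)+1) := Nat.mul_le_mul_left n (by omega)
    _ ≤ n * ((k'+1)+1) + (k'+1) := Nat.le_add_right _ _
  have h1 : Tendsto (fun n : ℕ => N (n*((k'+1)+1)+(k'+1)+1) / D (n*((k'+1)+1)+(k'+1)+1)) atTop (𝓝 x) :=
    hx.comp hmono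
  have h2 : Tendsto (fun n : ℕ => P (k'+1) / Q (k'+1) + (1/Q (k'+1)) * (N' (n+1) / D' (n+1))) atTop
      (𝓝 (P (k'+1) / Q (k'+1) + (1/Q (k'+1)) * L)) := by
    exact tendsto_const_nhds.add (hL.const_mul _)
  exact tendsto_nhds_unique (h1.congr key) h2
end
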